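/- arXiv:0810.2019 — 7 statements merged into one kernel-verified Lean document; each statement's English description precedes it below -/
import Mathlib

section
/- Let U ⊆ ℂⁿ be a connected open set and a ∈ U. Suppose ξ¹, …, ξⁿ : U → ℂⁿ are holomorphic vector fields that pairwise commute and whose values ξ¹(a), …, ξⁿ(a) span ℂⁿ. Then every holomorphic vector field η : U → ℂⁿ that commutes with each ξᵏ and satisfies η(a) = 0 vanishes identically on U. In particular, the evaluation map at a is injective on the complex span of {ξ¹, …, ξⁿ, η}. -/
/-!
Near `a` the values `ξ k z` still form a basis, and `[η, ξ k] = 0` reads `Dη (ξ k) = Dξ k (η)`.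
Expanding an arbitrary direction in this frame, with coefficients bounded by the norm of the
inverse frame and `‖Dξ k‖` bounded by Cauchy's estimate, gives `‖Dη z‖ ≤ K ‖η z‖` near `a`.
Grönwall's inequality along segments from `a` then forces `η = 0` near `a`, and the identity
theorem spreads this over the connected set `U`. Cauchy's estimate and the identity theorem are
both applied on complex lines, where holomorphic maps are analytic.
-/

open Set Filter Topology Metric

section Gronwall

variable {E F : Type*} [NormedAddCommGroup E] [NormedSpace ℝ E]
  [NormedAddCommGroup F] [NormedSpace ℝ F] {f : E → F} {f' : E → E →L[ℝ] F} {K : ℝ} {a : E}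

theorem Convex.eqOn_zero_of_norm_fderiv_le_mul_norm {s : Set E} (hs : Convex ℝ s)
    (hf : ∀ x ∈ s, HasFDerivAt f (f' x) x) (hK : ∀ x ∈ s, ‖f' x‖ ≤ K * ‖f x‖)
    (ha : a ∈ s) (h0 : f a = 0) : EqOn f 0 s := by
  intro z hz
  set γ : ℝ → E := fun t => a + t • (z - a)
  have hγ : ∀ t ∈ Icc (0 : ℝ) 1, γ t ∈ s := fun t ht => hs.add_smul_sub_mem ha hz ht
  have hderiv : ∀ t ∈ Icc (0 : ℝ) 1, HasDerivAt (f ∘ γ) (f' (γ t) (z - a)) t := fun t ht =>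
    (hf _ (hγ t ht)).comp_hasDerivAt t
      ((((hasDerivAt_id' t).smul_const (z - a)).const_add a).congr_deriv (one_smul ℝ _))
  have hbound : ∀ t ∈ Ico (0 : ℝ) 1, ‖f' (γ t) (z - a)‖ ≤ K * ‖z - a‖ * ‖(f ∘ γ) t‖ :=
    fun t ht => calc
      ‖f' (γ t) (z - a)‖ ≤ ‖f' (γ t)‖ * ‖z - a‖ := (f' (γ t)).le_opNorm _
      _ ≤ K * ‖f (γ t)‖ * ‖z - a‖ := by gcongr; exact hK _ (hγ t (Ico_subset_Icc_self ht))
      _ = K * ‖z - a‖ * ‖(f ∘ γ) t‖ := by rw [Function.comp_apply]; ring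
  simpa [γ] using eq_zero_of_abs_deriv_le_mul_abs_self_of_eq_zero_right
    (fun t ht => (hderiv t ht).continuousAt.continuousWithinAt)
    (fun t ht => (hderiv t (Ico_subset_Icc_self ht)).hasDerivWithinAt)
    (by simpa [γ] using h0) hbound 1 (right_mem_Icc.2 zero_le_one)

theorem eventuallyEq_zero_of_norm_fderiv_le_mul_norm
    (hf : ∀ᶠ x in 𝓝 a, HasFDerivAt f (f' x) x) (hK : ∀ᶠ x in 𝓝 a, ‖f' x‖ ≤ K * ‖f x‖)
    (h0 : f a = 0) : f =ᶠ[𝓝 a] 0 := by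
  obtain ⟨ε, hε, hball⟩ := Metric.eventually_nhds_iff_ball.1 (hf.and hK)
  filter_upwards [ball_mem_nhds a hε] with z hz
  exact (convex_ball a ε).eqOn_zero_of_norm_fderiv_le_mul_norm (fun x hx => (hball x hx).1)
    (fun x hx => (hball x hx).2) (mem_ball_self hε) h0 hz

end Gronwall

section Holomorphic

variable {E F : Type*} [NormedAddCommGroup E] [NormedSpace ℂ E]
  [NormedAddCommGroup F] [NormedSpace ℂ F] {f : E → F}

theorem norm_fderiv_le_of_forall_mem_closedBall_norm_le {w : E} {r C : ℝ} (hr : 0 < r)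
    (hf : DifferentiableOn ℂ f (closedBall w r)) (hC : ∀ x ∈ closedBall w r, ‖f x‖ ≤ C) :
    ‖fderiv ℂ f w‖ ≤ C / r := by
  have hC0 : 0 ≤ C := (norm_nonneg _).trans (hC w (mem_closedBall_self hr.le))
  refine ContinuousLinearMap.opNorm_le_bound _ (by positivity) fun v => ?_
  rcases eq_or_ne v 0 with rfl | hv
  · simp
  have hv0 : 0 < ‖v‖ := norm_pos_iff.2 hv
  set L : ℂ → E := fun ζ => w + ζ • v
  have hL : MapsTo L (closedBall 0 (r / ‖v‖)) (closedBall w r) := fun ζ hζ => by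
    rw [mem_closedBall_zero_iff, le_div_iff₀ hv0] at hζ
    simpa [L, dist_eq_norm, norm_smul] using hζ
  have hderiv : HasDerivAt (f ∘ L) (fderiv ℂ f w v) 0 := by
    have hfw : HasFDerivAt f (fderiv ℂ f w) (L 0) := by
      simpa [L] using (hf.differentiableAt (closedBall_mem_nhds w hr)).hasFDerivAt
    exact hfw.comp_hasDerivAt 0
      ((((hasDerivAt_id' 0).smul_const v).const_add w).congr_deriv (one_smul ℂ v))
  have hd : DiffContOnCl ℂ (f ∘ L) (ball 0 (r / ‖v‖)) := by
    refine DifferentiableOn.diffContOnCl ?_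
    rw [closure_ball _ (div_pos hr hv0).ne']
    exact hf.comp (by fun_prop : Differentiable ℂ L).differentiableOn hL
  calc ‖fderiv ℂ f w v‖ ≤ C / (r / ‖v‖) := by
        rw [← hderiv.deriv]
        exact Complex.norm_deriv_le_of_forall_mem_sphere_norm_le (div_pos hr hv0) hd
          fun ζ hζ => hC _ (hL (sphere_subset_closedBall hζ))
    _ = C / r * ‖v‖ := by field_simp

theorem exists_eventually_norm_fderiv_le {a : E} (hf : ∀ᶠ x in 𝓝 a, DifferentiableAt ℂ f x) :
    ∃ C, ∀ᶠ w in 𝓝 a, ‖fderiv ℂ f w‖ ≤ C := by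
  have hbd : ∀ᶠ x in 𝓝 a, ‖f x‖ < ‖f a‖ + 1 :=
    hf.self_of_nhds.continuousAt.norm.eventually_lt continuousAt_const (lt_add_one _)
  obtain ⟨ρ, hρ, hball⟩ := Metric.eventually_nhds_iff_ball.1 (hf.and hbd)
  refine ⟨(‖f a‖ + 1) / (ρ / 2), ?_⟩
  filter_upwards [ball_mem_nhds a (half_pos hρ)] with w hw
  have hsub : closedBall w (ρ / 2) ⊆ ball a ρ :=
    closedBall_subset_ball' (by rw [mem_ball] at hw; linarith)
  exact norm_fderiv_le_of_forall_mem_closedBall_norm_le (half_pos hρ)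
    (fun x hx => (hball x (hsub hx)).1.differentiableWithinAt)
    (fun x hx => (hball x (hsub hx)).2.le)

variable [CompleteSpace F]

theorem Convex.eqOn_zero_of_differentiableOn_of_eventuallyEq_zero {s : Set E} (hs : Convex ℝ s)
    (hso : IsOpen s) (hf : DifferentiableOn ℂ f s) {w : E} (hw : w ∈ s) (h0 : f =ᶠ[𝓝 w] 0) :
    EqOn f 0 s := by
  intro y hy
  set L : ℂ → E := fun ζ => w + ζ • (y - w)
  have hL : Continuous L := by fun_prop
  have hconv : Convex ℝ (L ⁻¹' s) := by
    intro ζ₁ h₁ ζ₂ h₂ p q hp hq hpq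
    have h := hs h₁ h₂ hp hq hpq
    simp only [mem_preimage, L] at h ⊢
    convert h using 1
    rw [smul_add, smul_add, add_add_add_comm, ← add_smul, hpq, one_smul, add_smul, smul_assoc,
      smul_assoc]
  have hanalytic : AnalyticOnNhd ℂ (f ∘ L) (L ⁻¹' s) :=
    (hf.comp (by fun_prop : Differentiable ℂ L).differentiableOn
      (mapsTo_preimage L s)).analyticOnNhd (hso.preimage hL)
  have h0' : f ∘ L =ᶠ[𝓝 0] 0 := h0.comp_tendsto (hL.tendsto' 0 w (by simp [L]))
  simpa [L] using hanalytic.eqOn_zero_of_preconnected_of_eventuallyEq_zero hconv.isPreconnected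
    (by simpa [L] using hw) h0' (show L 1 ∈ s by simpa [L] using hy)

theorem IsPreconnected.eqOn_zero_of_differentiableOn_of_eventuallyEq_zero {U : Set E}
    (hU : IsPreconnected U) (hUo : IsOpen U) (hf : DifferentiableOn ℂ f U) {a : E} (ha : a ∈ U)
    (h0 : f =ᶠ[𝓝 a] 0) : EqOn f 0 U := by
  have hsub : U ⊆ {z | f =ᶠ[𝓝 z] 0} := by
    refine hU.subset_of_closure_inter_subset isOpen_setOfPred_eventually_nhds ⟨a, ha, h0⟩ ?_
    rintro z ⟨hzc, hzU⟩
    obtain ⟨ρ, hρ, hball⟩ := Metric.isOpen_iff.1 hUo z hzU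
    obtain ⟨w, hw, hwz⟩ := mem_closure_iff_nhds.1 hzc _ (ball_mem_nhds z hρ)
    exact eventually_of_mem (ball_mem_nhds z hρ) <|
      (convex_ball z ρ).eqOn_zero_of_differentiableOn_of_eventuallyEq_zero isOpen_ball
        (hf.mono hball) hw hwz
  exact fun z hz => (hsub hz).self_of_nhds

end Holomorphic

section Frame

variable (𝕜 : Type*) [NontriviallyNormedField 𝕜] {ι X F G : Type*} [Fintype ι]
  [NormedAddCommGroup F] [NormedSpace 𝕜 F] [NormedAddCommGroup G] [NormedSpace 𝕜 G]

def frame (ξ : ι → X → F) (z : X) : (ι → 𝕜) →L[𝕜] F :=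
  ∑ k, (ContinuousLinearMap.proj k).smulRight (ξ k z)

variable {𝕜} {ξ : ι → X → F} {z : X}

@[simp]
theorem frame_apply (c : ι → 𝕜) : frame 𝕜 ξ z c = ∑ k, c k • ξ k z := by
  simp [frame]

theorem norm_frame_le : ‖frame 𝕜 ξ z‖ ≤ ∑ k, ‖ξ k z‖ := by
  refine ContinuousLinearMap.opNorm_le_bound _ (by positivity) fun c => ?_
  rw [frame_apply, Finset.sum_mul]
  refine norm_sum_le_of_le _ fun k _ => ?_
  rw [norm_smul, mul_comm]
  gcongr
  exact norm_le_pi_norm c k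

theorem ContinuousLinearMap.comp_frame (A : F →L[𝕜] G) :
    A.comp (frame 𝕜 ξ z) = frame 𝕜 (fun k x => A (ξ k x)) z := by
  ext
  simp

theorem continuousAt_frame [TopologicalSpace X] (h : ∀ k, ContinuousAt (ξ k) z) :
    ContinuousAt (frame 𝕜 ξ) z := by
  unfold frame
  exact tendsto_finsetSum _ fun k _ =>
    ((ContinuousLinearMap.smulRightL 𝕜 (ι → 𝕜) F (.proj k)).continuous.tendsto _).comp (h k)

theorem isInvertible_frame [CompleteSpace 𝕜] (hli : LinearIndependent 𝕜 fun k => ξ k z)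
    (hspan : Submodule.span 𝕜 (range fun k => ξ k z) = ⊤) : (frame 𝕜 ξ z).IsInvertible :=
  ⟨(Module.Basis.mk hli hspan.ge).equivFun.symm.toContinuousLinearEquiv, by ext; simp⟩

theorem norm_le_of_isInvertible_frame (A : F →L[𝕜] G) (h : (frame 𝕜 ξ z).IsInvertible) :
    ‖A‖ ≤ ‖(frame 𝕜 ξ z).inverse‖ * ∑ k, ‖A (ξ k z)‖ :=
  calc ‖A‖ = ‖(A.comp (frame 𝕜 ξ z)).comp (frame 𝕜 ξ z).inverse‖ := by
        rw [ContinuousLinearMap.comp_assoc, h.self_comp_inverse, ContinuousLinearMap.comp_id]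
    _ ≤ ‖A.comp (frame 𝕜 ξ z)‖ * ‖(frame 𝕜 ξ z).inverse‖ := ContinuousLinearMap.opNorm_comp_le _ _
    _ ≤ (∑ k, ‖A (ξ k z)‖) * ‖(frame 𝕜 ξ z).inverse‖ := by
        gcongr
        rw [A.comp_frame]
        exact norm_frame_le
    _ = _ := mul_comm _ _

end Frame

theorem eventuallyEq_zero_of_commute_frame {E ι : Type*} [NormedAddCommGroup E] [NormedSpace ℂ E]
    [Fintype ι] {ξ : ι → E → E} {η : E → E} {a : E}
    (hξ : ∀ k, ∀ᶠ z in 𝓝 a, DifferentiableAt ℂ (ξ k) z)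
    (hη : ∀ᶠ z in 𝓝 a, DifferentiableAt ℂ η z)
    (hcomm : ∀ k, ∀ᶠ z in 𝓝 a, fderiv ℂ η z (ξ k z) = fderiv ℂ (ξ k) z (η z))
    (hframe : (frame ℂ ξ a).IsInvertible) (hηa : η a = 0) : η =ᶠ[𝓝 a] 0 := by
  have hcont : ContinuousAt (frame ℂ ξ) a :=
    continuousAt_frame fun k => (hξ k).self_of_nhds.continuousAt
  have hinv : ∀ᶠ z in 𝓝 a, (frame ℂ ξ z).IsInvertible :=
    hcont.eventually_mem (ContinuousLinearEquiv.isOpen.mem_nhds hframe)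
  have hB : ∀ᶠ z in 𝓝 a, ‖(frame ℂ ξ z).inverse‖ < ‖(frame ℂ ξ a).inverse‖ + 1 :=
    ((hframe.contDiffAt_map_inverse (n := 0)).continuousAt.comp hcont).norm.eventually_lt
      continuousAt_const (lt_add_one _)
  choose C hC using fun k => exists_eventually_norm_fderiv_le (hξ k)
  refine eventuallyEq_zero_of_norm_fderiv_le_mul_norm
    (f' := fun z => (fderiv ℂ η z).restrictScalars ℝ)
    (K := (‖(frame ℂ ξ a).inverse‖ + 1) * ∑ k, C k) ?_ ?_ hηa
  · filter_upwards [hη] with z hz using hz.hasFDerivAt.restrictScalars ℝ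
  filter_upwards [hinv, hB, eventually_all.2 hC, eventually_all.2 hcomm] with z hinvz hBz hCz hcommz
  rw [ContinuousLinearMap.norm_restrictScalars]
  calc ‖fderiv ℂ η z‖ ≤ ‖(frame ℂ ξ z).inverse‖ * ∑ k, ‖fderiv ℂ η z (ξ k z)‖ :=
        norm_le_of_isInvertible_frame _ hinvz
    _ ≤ (‖(frame ℂ ξ a).inverse‖ + 1) * ∑ k, C k * ‖η z‖ := by
        gcongr with k
        rw [hcommz k]
        exact ((fderiv ℂ (ξ k) z).le_opNorm _).trans (by gcongr; exact hCz k)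
    _ = _ := by rw [← Finset.sum_mul, mul_assoc]

theorem eqOn_zero_of_mem_span_of_apply_eq_zero {𝕜 X F ι : Type*} [Ring 𝕜] [AddCommGroup F]
    [Module 𝕜 F] [Fintype ι] {v : ι → X → F} {η : X → F} {U : Set X} {a : X}
    (hv : LinearIndependent 𝕜 fun k => v k a) (hη : EqOn η 0 U) (ha : a ∈ U) {h : X → F}
    (hh : h ∈ Submodule.span 𝕜 (range v ∪ {η})) (hha : h a = 0) : EqOn h 0 U := by
  rw [Submodule.span_union, Submodule.mem_sup] at hh
  obtain ⟨p, hp, q, hq, rfl⟩ := hh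
  obtain ⟨c, rfl⟩ := Submodule.mem_span_singleton.1 hq
  obtain ⟨d, rfl⟩ := (Submodule.mem_span_range_iff_exists_fun 𝕜).1 hp
  have hd : d = 0 := by
    have hsum : ∑ k, d k • v k a = 0 := by simpa [Finset.sum_apply, hη ha] using hha
    funext k
    exact Fintype.linearIndependent_iff.1 hv d hsum k
  intro z hz
  simp [hd, hη hz]

theorem stmt_0_general {n : ℕ} (U : Set (Fin n → ℂ)) (hUopen : IsOpen U) (hUconn : IsConnected U)
    (a : Fin n → ℂ) (ha : a ∈ U)
    (ξ : Fin n → ((Fin n → ℂ) → (Fin n → ℂ))) (η : (Fin n → ℂ) → (Fin n → ℂ))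
    (hξ : ∀ k, DifferentiableOn ℂ (ξ k) U)
    (hη : DifferentiableOn ℂ η U)
    (hspan : Submodule.span ℂ (Set.range fun k => ξ k a) = ⊤)
    (hηcomm : ∀ k, ∀ z ∈ U,
      fderiv ℂ η z (ξ k z) - fderiv ℂ (ξ k) z (η z) = 0)
    (hηa : η a = 0) :
    (∀ z ∈ U, η z = 0) ∧
    (∀ f ∈ Submodule.span ℂ (Set.range ξ ∪ {η}),
      ∀ g ∈ Submodule.span ℂ (Set.range ξ ∪ {η}),
        f a = g a → Set.EqOn f g U) := by
  have hUa : U ∈ 𝓝 a := hUopen.mem_nhds ha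
  have hli : LinearIndependent ℂ fun k => ξ k a :=
    linearIndependent_of_top_le_span_of_card_eq_finrank hspan.ge (by simp)
  have hlocal : η =ᶠ[𝓝 a] 0 :=
    eventuallyEq_zero_of_commute_frame (fun k => (hξ k).eventually_differentiableAt hUa)
      (hη.eventually_differentiableAt hUa)
      (fun k => eventually_of_mem hUa fun z hz => sub_eq_zero.1 (hηcomm k z hz))
      (isInvertible_frame hli hspan) hηa
  have hzero : EqOn η 0 U :=
    hUconn.isPreconnected.eqOn_zero_of_differentiableOn_of_eventuallyEq_zero hUopen hη ha hlocal
  refine ⟨hzero, fun f hf g hg hfg z hz => sub_eq_zero.1 ?_⟩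
  exact eqOn_zero_of_mem_span_of_apply_eq_zero hli hzero ha (sub_mem hf hg) (by simp [hfg]) hz

/-- Let `U ⊆ ℂⁿ` be a connected open set and `a ∈ U`. Suppose
`ξ¹, …, ξⁿ : U → ℂⁿ` are holomorphic vector fields that pairwise commute and whose
values at `a` span `ℂⁿ`. Then every holomorphic vector field `η` on `U` commuting
with each `ξᵏ` and vanishing at `a` vanishes identically on `U`; in particular the
evaluation map at `a` is injective on the complex span of `{ξ¹, …, ξⁿ, η}`
(injectivity is expressed via equality on `U`). -/
theorem stmt_0 {n : ℕ} (U : Set (Fin n → ℂ)) (hUopen : IsOpen U) (hUconn : IsConnected U)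
    (a : Fin n → ℂ) (ha : a ∈ U)
    (ξ : Fin n → ((Fin n → ℂ) → (Fin n → ℂ))) (η : (Fin n → ℂ) → (Fin n → ℂ))
    (hξ : ∀ k, DifferentiableOn ℂ (ξ k) U)
    (hη : DifferentiableOn ℂ η U)
    (hcomm : ∀ k l, ∀ z ∈ U,
      fderiv ℂ (ξ l) z (ξ k z) - fderiv ℂ (ξ k) z (ξ l z) = 0)
    (hspan : Submodule.span ℂ (Set.range fun k => ξ k a) = ⊤)
    (hηcomm : ∀ k, ∀ z ∈ U,
      fderiv ℂ η z (ξ k z) - fderiv ℂ (ξ k) z (η z) = 0)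
    (hηa : η a = 0) :
    (∀ z ∈ U, η z = 0) ∧
    (∀ f ∈ Submodule.span ℂ (Set.range ξ ∪ {η}),
      ∀ g ∈ Submodule.span ℂ (Set.range ξ ∪ {η}),
        f a = g a → Set.EqOn f g U) :=
  stmt_0_general U hUopen hUconn a ha ξ η hξ hη hspan hηcomm hηa
end

section
/- With the vector fields η^m and ξ^ℓ on Ω = ℝⁿ × U as defined in the context, for every ℓ ∈ {1, …, k}, every s ≥ 1 and every choice of indices m₁, …, m_s ∈ {1, …, k}, the iterated Lie bracket satisfies [η^{m₁}, [η^{m₂}, …, [η^{m_s}, ξ^ℓ] … ]](x, t) = ( Σ_{j=k+1}^{n} (∂^{s+1} f_j / ∂t_{m₁} ⋯ ∂t_{m_s} ∂t_ℓ)(t) · e_j , 0 ) for all (x, t) ∈ Ω. -/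
/-- The Lie bracket of two vector fields `X Y : E → E`:
`[X,Y](p) = (DY)_p(X(p)) − (DX)_p(Y(p))`. -/
noncomputable def VBracket {E : Type*} [NormedAddCommGroup E] [NormedSpace ℝ E]
    (X Y : E → E) : E → E :=
  fun p => fderiv ℝ Y p (X p) - fderiv ℝ X p (Y p)

/-- The vector field `ξ^ℓ(x,t) = (−e_ℓ + Σ_{j ≥ k} (∂f_j/∂t_ℓ)(t) · e_j, 0)`
on `ℝⁿ × ℝᵏ` (indices `j = k+1, …, n` in 1-based notation correspond to the
`j : Fin n` with `k ≤ j`). -/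
noncomputable def xiField (n k : ℕ) (hkn : k ≤ n) (f : Fin n → (Fin k → ℝ) → ℝ) (ℓ : Fin k) :
    ((Fin n → ℝ) × (Fin k → ℝ)) → ((Fin n → ℝ) × (Fin k → ℝ)) :=
  fun p =>
    (-(Pi.single (Fin.castLE hkn ℓ) 1) +
      ∑ j ∈ Finset.univ.filter (fun j : Fin n => k ≤ (j : ℕ)),
        (fderiv ℝ (f j) p.2 (Pi.single ℓ 1)) • (Pi.single j (1 : ℝ) : Fin n → ℝ),
     0)

/-- The constant vector field `η^m(x,t) = (0, e_m)` on `ℝⁿ × ℝᵏ`. -/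
noncomputable def etaField (n k : ℕ) (m : Fin k) :
    ((Fin n → ℝ) × (Fin k → ℝ)) → ((Fin n → ℝ) × (Fin k → ℝ)) :=
  fun _ => (0, Pi.single m 1)

/-- The iterated bracket `[η^{m₁}, [η^{m₂}, …, [η^{m_s}, ξ^ℓ] … ]]`
for `L = [m₁, …, m_s]`. -/
noncomputable def iterBracket (n k : ℕ) (hkn : k ≤ n) (f : Fin n → (Fin k → ℝ) → ℝ)
    (L : List (Fin k)) (ℓ : Fin k) :
    ((Fin n → ℝ) × (Fin k → ℝ)) → ((Fin n → ℝ) × (Fin k → ℝ)) :=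
  L.foldr (fun m acc => VBracket (etaField n k m) acc) (xiField n k hkn f ℓ)

open Filter Topology

private lemma diffAt_iter {k : ℕ} {U : Set (Fin k → ℝ)} (hU : IsOpen U)
    {g : (Fin k → ℝ) → ℝ} (hg : ContDiffOn ℝ (⊤ : ℕ∞) g U) (s : ℕ) {t : Fin k → ℝ} (ht : t ∈ U) :
    DifferentiableAt ℝ (iteratedFDeriv ℝ s g) t := by
  have h1 : DifferentiableOn ℝ (iteratedFDerivWithin ℝ s g U) U :=
    hg.differentiableOn_iteratedFDerivWithin (by exact_mod_cast ENat.coe_lt_top s) hU.uniqueDiffOn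
  have h2 : DifferentiableWithinAt ℝ (iteratedFDeriv ℝ s g) U t :=
    (h1 t ht).congr (fun y hy => (iteratedFDerivWithin_of_isOpen s hU hy).symm)
      ((iteratedFDerivWithin_of_isOpen s hU ht).symm)
  exact h2.differentiableAt (hU.mem_nhds ht)

private lemma diffAt_eval {k s : ℕ} {U : Set (Fin k → ℝ)} (hU : IsOpen U)
    {g : (Fin k → ℝ) → ℝ} (hg : ContDiffOn ℝ (⊤ : ℕ∞) g U) {t : Fin k → ℝ} (ht : t ∈ U)
    (vs : Fin s → (Fin k → ℝ)) :
    DifferentiableAt ℝ (fun t' => iteratedFDeriv ℝ s g t' vs) t :=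
  (ContinuousMultilinearMap.apply ℝ (fun _ : Fin s => (Fin k → ℝ)) ℝ vs).differentiableAt.comp t
    (diffAt_iter hU hg s ht)

private lemma fderiv_iter_apply {k s : ℕ} {U : Set (Fin k → ℝ)} (hU : IsOpen U)
    {g : (Fin k → ℝ) → ℝ} (hg : ContDiffOn ℝ (⊤ : ℕ∞) g U) {t : Fin k → ℝ} (ht : t ∈ U)
    (vs : Fin s → (Fin k → ℝ)) (w : Fin k → ℝ) :
    fderiv ℝ (fun t' => iteratedFDeriv ℝ s g t' vs) t w
      = iteratedFDeriv ℝ (s + 1) g t (Fin.cons w vs) := by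
  have hd := diffAt_iter hU hg s ht
  have h1 : (fun t' => iteratedFDeriv ℝ s g t' vs)
      = (ContinuousMultilinearMap.apply ℝ (fun _ : Fin s => (Fin k → ℝ)) ℝ vs) ∘
        (iteratedFDeriv ℝ s g) := rfl
  rw [h1, fderiv_comp t (ContinuousLinearMap.differentiableAt _) hd,
    ContinuousLinearMap.fderiv, ContinuousLinearMap.comp_apply,
    ContinuousMultilinearMap.apply_apply, iteratedFDeriv_succ_apply_left]
  simp

private lemma key {n k : ℕ} {U : Set (Fin k → ℝ)} (hU : IsOpen U)
    {f : Fin n → (Fin k → ℝ) → ℝ}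
    (hf : ∀ j : Fin n, k ≤ (j : ℕ) → ContDiffOn ℝ (⊤ : ℕ∞) (f j) U)
    {s : ℕ} (vs : Fin s → (Fin k → ℝ)) (c : Fin n → ℝ)
    (Y : ((Fin n → ℝ) × (Fin k → ℝ)) → ((Fin n → ℝ) × (Fin k → ℝ)))
    (hY : ∀ p : (Fin n → ℝ) × (Fin k → ℝ), p.2 ∈ U →
      Y p = (c + ∑ j ∈ Finset.univ.filter (fun j : Fin n => k ≤ (j : ℕ)),
        (iteratedFDeriv ℝ s (f j) p.2 vs) • (Pi.single j (1 : ℝ) : Fin n → ℝ), 0))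
    (m : Fin k) (x : Fin n → ℝ) {t : Fin k → ℝ} (ht : t ∈ U) :
    VBracket (etaField n k m) Y (x, t) =
      (∑ j ∈ Finset.univ.filter (fun j : Fin n => k ≤ (j : ℕ)),
        (iteratedFDeriv ℝ (s + 1) (f j) t (Fin.cons (Pi.single m 1) vs)) •
          (Pi.single j (1 : ℝ) : Fin n → ℝ), 0) := by
  classical
  set J := Finset.univ.filter (fun j : Fin n => k ≤ (j : ℕ)) with hJ
  have hA : ∀ j ∈ J, DifferentiableAt ℝ (fun t' => iteratedFDeriv ℝ s (f j) t' vs) t :=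
    fun j hj => diffAt_eval hU (hf j (Finset.mem_filter.1 hj).2) ht vs
  set F : (Fin k → ℝ) → (Fin n → ℝ) :=
    fun t' => ∑ j ∈ J, (iteratedFDeriv ℝ s (f j) t' vs) • (Pi.single j (1 : ℝ) : Fin n → ℝ)
    with hF
  have hFd : DifferentiableAt ℝ F t :=
    DifferentiableAt.fun_sum (fun j hj => (hA j hj).smul_const _)
  have hGd : HasFDerivAt (fun p : (Fin n → ℝ) × (Fin k → ℝ) => (c + F p.2, (0 : Fin k → ℝ)))
      (((fderiv ℝ F t).comp (ContinuousLinearMap.snd ℝ (Fin n → ℝ) (Fin k → ℝ))).prod 0) (x, t) :=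
    ((hFd.hasFDerivAt.comp (f := Prod.snd) (x, t) hasFDerivAt_snd).const_add c).prodMk (hasFDerivAt_const _ _)
  have hev : Y =ᶠ[𝓝 (x, t)] (fun p => (c + F p.2, (0 : Fin k → ℝ))) := by
    filter_upwards [(hU.preimage continuous_snd).mem_nhds
      (show ((x, t) : (Fin n → ℝ) × (Fin k → ℝ)) ∈ Prod.snd ⁻¹' U from ht)] with p hp
    exact hY p hp
  have hfY : fderiv ℝ Y (x, t)
      = ((fderiv ℝ F t).comp (ContinuousLinearMap.snd ℝ (Fin n → ℝ) (Fin k → ℝ))).prod 0 := by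
    rw [hev.fderiv_eq, hGd.fderiv]
  have heta : fderiv ℝ (etaField n k m) (x, t) = 0 := by
    have : etaField n k m = fun _ : (Fin n → ℝ) × (Fin k → ℝ) =>
        ((0 : Fin n → ℝ), (Pi.single m 1 : Fin k → ℝ)) := rfl
    rw [this, fderiv_fun_const]
    rfl
  have hFm : fderiv ℝ F t (Pi.single m 1)
      = ∑ j ∈ J, (iteratedFDeriv ℝ (s + 1) (f j) t (Fin.cons (Pi.single m 1) vs)) •
          (Pi.single j (1 : ℝ) : Fin n → ℝ) := by
    rw [hF, fderiv_fun_sum (fun j hj => (hA j hj).smul_const _), ContinuousLinearMap.sum_apply]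
    refine Finset.sum_congr rfl (fun j hj => ?_)
    rw [fderiv_smul_const (hA j hj), ContinuousLinearMap.smulRight_apply]
    congr 1
    exact fderiv_iter_apply hU (hf j (Finset.mem_filter.1 hj).2) ht vs (Pi.single m 1)
  show fderiv ℝ Y (x, t) (etaField n k m (x, t))
      - fderiv ℝ (etaField n k m) (x, t) (Y (x, t)) = _
  rw [heta, hfY]
  have hetav : etaField n k m (x, t) = ((0 : Fin n → ℝ), (Pi.single m 1 : Fin k → ℝ)) := rfl
  rw [hetav]
  simp only [ContinuousLinearMap.zero_apply, sub_zero, ContinuousLinearMap.prod_apply,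
    ContinuousLinearMap.comp_apply, ContinuousLinearMap.coe_snd', ContinuousLinearMap.zero_apply]
  exact Prod.ext hFm rfl

private lemma stmt_aux {n k : ℕ} (hkn : k ≤ n) {U : Set (Fin k → ℝ)} (hU : IsOpen U)
    {f : Fin n → (Fin k → ℝ) → ℝ}
    (hf : ∀ j : Fin n, k ≤ (j : ℕ) → ContDiffOn ℝ (⊤ : ℕ∞) (f j) U) (ℓ : Fin k) :
    ∀ (L : List (Fin k)), L ≠ [] → ∀ (x : Fin n → ℝ) (t : Fin k → ℝ), t ∈ U →
    iterBracket n k hkn f L ℓ (x, t) =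
      (∑ j ∈ Finset.univ.filter (fun j : Fin n => k ≤ (j : ℕ)),
        (iteratedFDeriv ℝ (L.length + 1) (f j) t
          (fun i : Fin (L.length + 1) => Pi.single ((L ++ [ℓ]).getD i ℓ) (1 : ℝ))) •
          (Pi.single j (1 : ℝ) : Fin n → ℝ), 0) := by
  intro L
  induction L with
  | nil => exact fun h => absurd rfl h
  | cons m L ih =>
    intro _ x t ht
    have hstep : iterBracket n k hkn f (m :: L) ℓ (x, t)
        = VBracket (etaField n k m) (iterBracket n k hkn f L ℓ) (x, t) := rfl
    rw [hstep]
    cases L with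
    | nil =>
      have hY : ∀ p : (Fin n → ℝ) × (Fin k → ℝ), p.2 ∈ U →
          iterBracket n k hkn f [] ℓ p
            = (-(Pi.single (Fin.castLE hkn ℓ) 1) +
                ∑ j ∈ Finset.univ.filter (fun j : Fin n => k ≤ (j : ℕ)),
                (iteratedFDeriv ℝ 1 (f j) p.2 (fun _ : Fin 1 => Pi.single ℓ (1 : ℝ))) •
                  (Pi.single j (1 : ℝ) : Fin n → ℝ), 0) := by
        intro p _
        simp only [iterBracket, List.foldr, xiField, iteratedFDeriv_one_apply]
      have h := key hU hf (fun _ : Fin 1 => Pi.single ℓ (1 : ℝ))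
        (-(Pi.single (Fin.castLE hkn ℓ) 1)) (iterBracket n k hkn f [] ℓ) hY m x ht
      have harg : (Fin.cons (Pi.single m 1)
            (fun _ : Fin 1 => Pi.single ℓ (1 : ℝ)) : Fin 2 → (Fin k → ℝ))
          = fun i : Fin 2 => Pi.single ((([m] : List (Fin k)) ++ [ℓ]).getD (↑i) ℓ) (1 : ℝ) := by
        funext i
        refine Fin.cases ?_ (fun i' => ?_) i
        · rfl
        · simp [Subsingleton.elim i' 0]
      rw [h, harg]
      rfl
    | cons m' L' =>
      have hY : ∀ p : (Fin n → ℝ) × (Fin k → ℝ), p.2 ∈ U →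
          iterBracket n k hkn f (m' :: L') ℓ p
            = ((0 : Fin n → ℝ) +
                ∑ j ∈ Finset.univ.filter (fun j : Fin n => k ≤ (j : ℕ)),
                (iteratedFDeriv ℝ ((m' :: L').length + 1) (f j) p.2
                  (fun i : Fin ((m' :: L').length + 1) =>
                    Pi.single (((m' :: L') ++ [ℓ]).getD i ℓ) (1 : ℝ))) •
                  (Pi.single j (1 : ℝ) : Fin n → ℝ), 0) := by
        intro p hp
        rw [zero_add]
        have := ih (by simp) p.1 p.2 hp
        simpa using this
      have h := key hU hf
        (fun i : Fin ((m' :: L').length + 1) =>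
          Pi.single (((m' :: L') ++ [ℓ]).getD i ℓ) (1 : ℝ))
        (0 : Fin n → ℝ) (iterBracket n k hkn f (m' :: L') ℓ) hY m x ht
      have harg : (Fin.cons (Pi.single m 1)
            (fun i : Fin ((m' :: L').length + 1) =>
              Pi.single (((m' :: L') ++ [ℓ]).getD (↑i) ℓ) (1 : ℝ)) :
            Fin ((m' :: L').length + 1 + 1) → (Fin k → ℝ))
          = fun i : Fin ((m' :: L').length + 1 + 1) =>
              Pi.single (((m :: m' :: L') ++ [ℓ]).getD (↑i) ℓ) (1 : ℝ) := by
        funext i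
        refine Fin.cases ?_ (fun i' => ?_) i
        · rfl
        · simp
      rw [h, harg]
      rfl

/-- With the vector fields `η^m`, `ξ^ℓ` on `Ω = ℝⁿ × U` as above,
for every `ℓ`, every `s ≥ 1` and indices `m₁, …, m_s`, the iterated Lie bracket
`[η^{m₁}, [η^{m₂}, …, [η^{m_s}, ξ^ℓ] … ]](x,t)` equals
`(Σ_{j≥k} (∂^{s+1} f_j / ∂t_{m₁} ⋯ ∂t_{m_s} ∂t_ℓ)(t) · e_j, 0)`. -/
theorem stmt_2 {n k : ℕ} (hk : 1 ≤ k) (hkn : k < n)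
    (U : Set (Fin k → ℝ)) (hU : IsOpen U)
    (f : Fin n → (Fin k → ℝ) → ℝ)
    (hf : ∀ j : Fin n, k ≤ (j : ℕ) → ContDiffOn ℝ (⊤ : ℕ∞) (f j) U)
    (L : List (Fin k)) (hL : L ≠ []) (ℓ : Fin k)
    (x : Fin n → ℝ) (t : Fin k → ℝ) (ht : t ∈ U) :
    iterBracket n k hkn.le f L ℓ (x, t) =
      (∑ j ∈ Finset.univ.filter (fun j : Fin n => k ≤ (j : ℕ)),
        (iteratedFDeriv ℝ (L.length + 1) (f j) t
          (fun i : Fin (L.length + 1) => Pi.single ((L ++ [ℓ]).getD i ℓ) (1 : ℝ))) •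
          (Pi.single j (1 : ℝ) : Fin n → ℝ),
       0) :=
  stmt_aux hkn.le hU hf ℓ L hL x t ht
end

section
/- With the vector fields η^m and ξ^ℓ on Ω = ℝⁿ × U as defined in the context, assume in addition that the functions f_j are real-analytic on U, that at a given point a ∈ U one has f_j(a) = 0 and (df_j)_a = 0 for all j = k+1, …, n, and that the germs at a of f_{k+1}, …, f_n are linearly independent over ℝ (i.e., no nontrivial real linear combination of the f_j vanishes identically on some neighbourhood of a). Then for every x ∈ ℝⁿ, the values at the point (x, a) of the fields η¹, …, η^k, ξ¹, …, ξ^k together with the values at (x, a) of all iterated brackets [η^{m₁}, [η^{m₂}, …, [η^{m_s}, ξ^ℓ] … ]] (s ≥ 1, m₁, …, m_s, ℓ ∈ {1, …, k}) span all of ℝⁿ × ℝᵏ. -/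
open Filter Topology

theorem AnalyticAt.eventually_eq_zero_of_iteratedFDeriv_eq_zero {𝕜 E F : Type*}
    [NontriviallyNormedField 𝕜] [CharZero 𝕜] [NormedAddCommGroup E] [NormedSpace 𝕜 E]
    [NormedAddCommGroup F] [NormedSpace 𝕜 F] [CompleteSpace F] {H : E → F} {a : E}
    (hH : AnalyticAt 𝕜 H a) (h0 : ∀ n, iteratedFDeriv 𝕜 n H a = 0) : H =ᶠ[𝓝 a] 0 := by
  obtain ⟨p, r, hp⟩ := hH
  filter_upwards [Metric.eball_mem_nhds a hp.r_pos] with t ht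
  have hsum := hp.hasSum_iteratedFDeriv (y := t - a) (by simpa [edist_eq_enorm_sub] using ht)
  simp only [add_sub_cancel, h0, zero_apply, smul_zero] at hsum
  exact hsum.unique hasSum_zero

/-- `iteratedDirDeriv [v₁, …, vₛ] H = ∂_{v₁} ⋯ ∂_{vₛ} H`. -/
noncomputable def iteratedDirDeriv {E F : Type*} [NormedAddCommGroup E] [NormedSpace ℝ E]
    [NormedAddCommGroup F] [NormedSpace ℝ F] (vs : List E) (H : E → F) : E → F :=
  vs.foldr (fun v G t => fderiv ℝ G t v) H

section iteratedDirDeriv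

variable {E F G : Type*} [NormedAddCommGroup E] [NormedSpace ℝ E]
  [NormedAddCommGroup F] [NormedSpace ℝ F] [NormedAddCommGroup G] [NormedSpace ℝ G]

@[simp] theorem iteratedDirDeriv_nil (H : E → F) : iteratedDirDeriv [] H = H := rfl

@[simp] theorem iteratedDirDeriv_cons (v : E) (vs : List E) (H : E → F) :
    iteratedDirDeriv (v :: vs) H = fun t => fderiv ℝ (iteratedDirDeriv vs H) t v := rfl

theorem iteratedDirDeriv_append (vs ws : List E) (H : E → F) :
    iteratedDirDeriv (vs ++ ws) H = iteratedDirDeriv vs (iteratedDirDeriv ws H) :=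
  List.foldr_append ..

theorem iteratedDirDeriv_const_add {vs : List E} (hvs : vs ≠ []) (c : F) (H : E → F) :
    iteratedDirDeriv vs (fun t => c + H t) = iteratedDirDeriv vs H := by
  obtain ⟨ws, v, rfl⟩ := (List.eq_nil_or_concat' vs).resolve_left hvs
  simp only [iteratedDirDeriv_append, iteratedDirDeriv_cons, iteratedDirDeriv_nil,
    fderiv_const_add]

theorem Filter.EventuallyEq.iteratedDirDeriv {H₁ H₂ : E → F} {p : E} (h : H₁ =ᶠ[𝓝 p] H₂)
    (vs : List E) : _root_.iteratedDirDeriv vs H₁ =ᶠ[𝓝 p] _root_.iteratedDirDeriv vs H₂ := by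
  induction vs with
  | nil => exact h
  | cons v vs ih =>
    exact (ih.fderiv (𝕜 := ℝ)).mono fun t ht => by simp only [iteratedDirDeriv_cons, ht]

variable [CompleteSpace F]

theorem AnalyticOnNhd.iteratedDirDeriv {H : E → F} {s : Set E} (hH : AnalyticOnNhd ℝ H s)
    (vs : List E) : AnalyticOnNhd ℝ (_root_.iteratedDirDeriv vs H) s := by
  induction vs with
  | nil => exact hH
  | cons v vs ih => exact (ContinuousLinearMap.apply ℝ F v).comp_analyticOnNhd ih.fderiv

theorem ContinuousLinearMap.iteratedDirDeriv_comp_left (T : F →L[ℝ] G) {H : E → F} {s : Set E}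
    (hs : IsOpen s) (hH : AnalyticOnNhd ℝ H s) (vs : List E) {p : E} (hp : p ∈ s) :
    iteratedDirDeriv vs (T ∘ H) p = T (iteratedDirDeriv vs H p) := by
  induction vs generalizing p with
  | nil => rfl
  | cons v vs ih =>
    have hcomp : iteratedDirDeriv vs (T ∘ H) =ᶠ[𝓝 p] T ∘ iteratedDirDeriv vs H :=
      eventually_of_mem (hs.mem_nhds hp) fun q hq => ih hq
    simp only [iteratedDirDeriv_cons, hcomp.fderiv_eq]
    rw [fderiv_comp p T.differentiableAt ((hH.iteratedDirDeriv vs p hp).differentiableAt)]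
    simp

theorem ContinuousLinearMap.iteratedDirDeriv_comp_right (A : E →L[ℝ] G) {H : G → F}
    {s : Set G} (hs : IsOpen s) (hH : AnalyticOnNhd ℝ H s) (vs : List E) {p : E}
    (hp : A p ∈ s) :
    iteratedDirDeriv vs (H ∘ A) p = iteratedDirDeriv (vs.map A) H (A p) := by
  induction vs generalizing p with
  | nil => rfl
  | cons v vs ih =>
    have hcomp : iteratedDirDeriv vs (H ∘ A) =ᶠ[𝓝 p] iteratedDirDeriv (vs.map A) H ∘ A :=
      eventually_of_mem ((hs.preimage A.continuous).mem_nhds hp) fun q hq => ih hq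
    simp only [iteratedDirDeriv_cons, List.map_cons, hcomp.fderiv_eq]
    rw [fderiv_comp p ((hH.iteratedDirDeriv _ _ hp).differentiableAt) A.differentiableAt]
    simp

theorem iteratedFDeriv_eq_iteratedDirDeriv {H : E → F} {s : Set E} (hs : IsOpen s)
    (hH : AnalyticOnNhd ℝ H s) {t : E} (ht : t ∈ s) (n : ℕ) (v : Fin n → E) :
    iteratedFDeriv ℝ n H t v = iteratedDirDeriv (List.ofFn v) H t := by
  induction n generalizing t with
  | zero => simp [iteratedFDeriv_zero_apply]
  | succ n ih =>
    have htail : (fun u => iteratedFDeriv ℝ n H u fun i => v i.succ)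
        =ᶠ[𝓝 t] iteratedDirDeriv (List.ofFn fun i => v i.succ) H :=
      eventually_of_mem (hs.mem_nhds ht) fun u hu => ih hu _
    simp only [iteratedFDeriv_succ_apply_left, List.ofFn_succ, iteratedDirDeriv_cons]
    rw [← htail.fderiv_eq,
      fderiv_continuousMultilinear_apply_const_apply
        ((hH.iteratedFDeriv n t ht).differentiableAt)]
    rfl

theorem eventually_eq_zero_of_iteratedDirDeriv_basis_eq_zero {ι : Type*} [Finite ι]
    (b : Module.Basis ι ℝ E) {H : E → F} {s : Set E} (hs : IsOpen s) (hH : AnalyticOnNhd ℝ H s)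
    {a : E} (ha : a ∈ s) (h0 : ∀ M : List ι, iteratedDirDeriv (M.map b) H a = 0) :
    H =ᶠ[𝓝 a] 0 := by
  refine (hH a ha).eventually_eq_zero_of_iteratedFDeriv_eq_zero fun n => ?_
  refine ContinuousMultilinearMap.toMultilinearMap_injective <|
    Module.Basis.ext_multilinear (fun _ => b) fun v => ?_
  simpa [iteratedFDeriv_eq_iteratedDirDeriv hs hH ha, List.map_ofFn, Function.comp_def]
    using h0 (List.ofFn v)

end iteratedDirDeriv

theorem VBracket_const_left {E : Type*} [NormedAddCommGroup E] [NormedSpace ℝ E] (c : E)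
    (Y : E → E) : VBracket (fun _ => c) Y = fun p => fderiv ℝ Y p c := by
  funext p
  simp [VBracket]

noncomputable def fLinComb {n k : ℕ} (c : Fin n → ℝ) (f : Fin n → (Fin k → ℝ) → ℝ) :
    (Fin k → ℝ) → ℝ :=
  fun t => ∑ j ∈ Finset.univ.filter (fun j : Fin n => k ≤ (j : ℕ)), c j * f j t

section Fields

variable {n k : ℕ} (hkn : k ≤ n) {f : Fin n → (Fin k → ℝ) → ℝ}

theorem analyticOnNhd_fLinComb {U : Set (Fin k → ℝ)}
    (hf : ∀ j : Fin n, k ≤ (j : ℕ) → AnalyticOnNhd ℝ (f j) U) (c : Fin n → ℝ) :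
    AnalyticOnNhd ℝ (fLinComb c f) U :=
  Finset.analyticOnNhd_fun_sum _ fun j hj =>
    analyticOnNhd_const.mul (hf j (Finset.mem_filter.1 hj).2)

theorem fderiv_fLinComb {t : Fin k → ℝ}
    (hf : ∀ j : Fin n, k ≤ (j : ℕ) → DifferentiableAt ℝ (f j) t) (c : Fin n → ℝ) :
    fderiv ℝ (fLinComb c f) t =
      ∑ j ∈ Finset.univ.filter (fun j : Fin n => k ≤ (j : ℕ)), c j • fderiv ℝ (f j) t := by
  unfold fLinComb
  rw [fderiv_fun_sum fun j hj => ((hf j (Finset.mem_filter.1 hj).2).const_mul (c j))]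
  exact Finset.sum_congr rfl fun j hj => fderiv_const_mul (hf j (Finset.mem_filter.1 hj).2) _

theorem iterBracket_eq_iteratedDirDeriv (L : List (Fin k)) (ℓ : Fin k) :
    iterBracket n k hkn f L ℓ =
      iteratedDirDeriv (L.map fun m => ((0 : Fin n → ℝ), (Pi.single m 1 : Fin k → ℝ)))
        (xiField n k hkn f ℓ) := by
  induction L with
  | nil => rfl
  | cons m L ih =>
    change VBracket (etaField n k m) (iterBracket n k hkn f L ℓ) = _
    rw [ih]
    exact VBracket_const_left _ _

theorem xiField_analyticOnNhd {U : Set (Fin k → ℝ)}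
    (hf : ∀ j : Fin n, k ≤ (j : ℕ) → AnalyticOnNhd ℝ (f j) U) (ℓ : Fin k) :
    AnalyticOnNhd ℝ (xiField n k hkn f ℓ) (Prod.snd ⁻¹' U) := by
  intro p hp
  have hcoeff : ∀ j ∈ Finset.univ.filter (fun j : Fin n => k ≤ (j : ℕ)),
      AnalyticAt ℝ (fun q : (Fin n → ℝ) × (Fin k → ℝ) => fderiv ℝ (f j) q.2 (Pi.single ℓ 1)) p :=
    fun j hj => by
      have hD := ((hf j (Finset.mem_filter.1 hj).2).fderiv p.2 hp).comp analyticAt_snd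
      exact ((ContinuousLinearMap.apply ℝ ℝ (Pi.single ℓ 1 : Fin k → ℝ)).analyticAt _).comp hD
  unfold xiField
  fun_prop

theorem map_xiField (φ : (Fin n → ℝ) × (Fin k → ℝ) →L[ℝ] ℝ) (ℓ : Fin k)
    {p : (Fin n → ℝ) × (Fin k → ℝ)}
    (hf : ∀ j : Fin n, k ≤ (j : ℕ) → DifferentiableAt ℝ (f j) p.2) :
    φ (xiField n k hkn f ℓ p) = -φ (Pi.single (Fin.castLE hkn ℓ) 1, 0) +
      fderiv ℝ (fLinComb (fun j => φ (Pi.single j 1, 0)) f) p.2 (Pi.single ℓ 1) := by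
  have hξ : xiField n k hkn f ℓ p = -(Pi.single (Fin.castLE hkn ℓ) 1, 0) +
      ∑ j ∈ Finset.univ.filter (fun j : Fin n => k ≤ (j : ℕ)),
        fderiv ℝ (f j) p.2 (Pi.single ℓ 1) • ((Pi.single j 1 : Fin n → ℝ), (0 : Fin k → ℝ)) := by
    ext <;> simp [xiField, Prod.fst_sum, Prod.snd_sum]
  rw [hξ, map_add, map_neg, map_sum, fderiv_fLinComb hf]
  simp [mul_comm, -Prod.smul_mk]

theorem map_iterBracket (φ : (Fin n → ℝ) × (Fin k → ℝ) →L[ℝ] ℝ) {U : Set (Fin k → ℝ)}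
    (hU : IsOpen U) (hf : ∀ j : Fin n, k ≤ (j : ℕ) → AnalyticOnNhd ℝ (f j) U)
    {L : List (Fin k)} (hL : L ≠ []) (ℓ : Fin k) (x : Fin n → ℝ) {a : Fin k → ℝ} (ha : a ∈ U) :
    φ (iterBracket n k hkn f L ℓ (x, a)) =
      iteratedDirDeriv ((L ++ [ℓ]).map (Pi.basisFun ℝ (Fin k)))
        (fLinComb (fun j => φ (Pi.single j 1, 0)) f) a := by
  set h := fLinComb (fun j => φ (Pi.single j 1, 0)) f
  set G : (Fin k → ℝ) → ℝ := fun t => -φ (Pi.single (Fin.castLE hkn ℓ) 1, 0) +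
    fderiv ℝ h t (Pi.single ℓ 1)
  have hU' : IsOpen (Prod.snd ⁻¹' U : Set ((Fin n → ℝ) × (Fin k → ℝ))) :=
    hU.preimage continuous_snd
  have hφξ : φ ∘ xiField n k hkn f ℓ =ᶠ[𝓝 (x, a)] G ∘ ContinuousLinearMap.snd ℝ _ _ :=
    eventually_of_mem (hU'.mem_nhds ha) fun p hp =>
      map_xiField hkn φ ℓ fun j hj => (hf j hj p.2 hp).differentiableAt
  have hG : AnalyticOnNhd ℝ G U := analyticOnNhd_const.add
    ((ContinuousLinearMap.apply ℝ ℝ (Pi.single ℓ 1 : Fin k → ℝ)).comp_analyticOnNhd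
      (analyticOnNhd_fLinComb hf _).fderiv)
  rw [iterBracket_eq_iteratedDirDeriv, ← φ.iteratedDirDeriv_comp_left hU'
      (xiField_analyticOnNhd hkn hf ℓ) _ (show (x, a).2 ∈ U from ha),
    (hφξ.iteratedDirDeriv _).eq_of_nhds,
    ContinuousLinearMap.iteratedDirDeriv_comp_right _ hU hG _ ha,
    iteratedDirDeriv_const_add (by simpa using hL), List.map_append, iteratedDirDeriv_append]
  simp [Function.comp_def,
    show ⇑(Pi.basisFun ℝ (Fin k)) = _ from funext (Pi.basisFun_apply ℝ (Fin k))]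

end Fields

theorem eq_zero_of_map_fields_eq_zero {n k : ℕ} (hkn : k ≤ n)
    {U : Set (Fin k → ℝ)} (hU : IsOpen U) {a : Fin k → ℝ} (haU : a ∈ U)
    {f : Fin n → (Fin k → ℝ) → ℝ}
    (hf : ∀ j : Fin n, k ≤ (j : ℕ) → AnalyticOnNhd ℝ (f j) U)
    (hf0 : ∀ j : Fin n, k ≤ (j : ℕ) → f j a = 0)
    (hdf0 : ∀ j : Fin n, k ≤ (j : ℕ) → fderiv ℝ (f j) a = 0)
    (hindep : ∀ c : Fin n → ℝ, fLinComb c f =ᶠ[𝓝 a] 0 → ∀ j : Fin n, k ≤ (j : ℕ) → c j = 0)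
    (x : Fin n → ℝ) (φ : Module.Dual ℝ ((Fin n → ℝ) × (Fin k → ℝ)))
    (hη : ∀ m, φ (etaField n k m (x, a)) = 0)
    (hξ : ∀ ℓ, φ (xiField n k hkn f ℓ (x, a)) = 0)
    (hbr : ∀ L : List (Fin k), L ≠ [] → ∀ ℓ, φ (iterBracket n k hkn f L ℓ (x, a)) = 0) :
    φ = 0 := by
  set φ' := LinearMap.toContinuousLinearMap φ
  set c : Fin n → ℝ := fun j => φ (Pi.single j 1, 0)
  have hdiff : ∀ j : Fin n, k ≤ (j : ℕ) → DifferentiableAt ℝ (f j) a :=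
    fun j hj => (hf j hj a haU).differentiableAt
  have hh0 : fLinComb c f a = 0 :=
    Finset.sum_eq_zero fun j hj => by rw [hf0 j (Finset.mem_filter.1 hj).2, mul_zero]
  have hdh0 : fderiv ℝ (fLinComb c f) a = 0 := by
    rw [fderiv_fLinComb hdiff]
    exact Finset.sum_eq_zero fun j hj => by rw [hdf0 j (Finset.mem_filter.1 hj).2, smul_zero]
  have hc_lt : ∀ j : Fin n, (j : ℕ) < k → c j = 0 := by
    intro j hj
    have := map_xiField hkn φ' ⟨j, hj⟩ (p := (x, a)) hdiff
    simpa [φ', c, hdh0, hξ] using this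
  have hc_ge : ∀ j : Fin n, k ≤ (j : ℕ) → c j = 0 := by
    refine hindep c (eventually_eq_zero_of_iteratedDirDeriv_basis_eq_zero (Pi.basisFun ℝ (Fin k))
      hU (analyticOnNhd_fLinComb hf c) haU fun M => ?_)
    rcases M.eq_nil_or_concat' with rfl | ⟨L, ℓ, rfl⟩
    · exact hh0
    rcases eq_or_ne L [] with rfl | hL
    · simp [hdh0]
    · exact (map_iterBracket hkn φ' hU hf hL ℓ x haU).symm.trans (hbr L hL ℓ)
  refine LinearMap.prod_ext ((Pi.basisFun ℝ (Fin n)).ext fun j => ?_)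
    ((Pi.basisFun ℝ (Fin k)).ext fun m => ?_)
  · rcases lt_or_ge (j : ℕ) k with hj | hj
    · simpa using hc_lt j hj
    · simpa using hc_ge j hj
  · simpa [etaField] using hη m

theorem stmt_3_general {n k : ℕ} (hkn : k < n)
    (U : Set (Fin k → ℝ)) (hU : IsOpen U) (a : Fin k → ℝ) (haU : a ∈ U)
    (f : Fin n → (Fin k → ℝ) → ℝ)
    (hf : ∀ j : Fin n, k ≤ (j : ℕ) → AnalyticOnNhd ℝ (f j) U)
    (hf0 : ∀ j : Fin n, k ≤ (j : ℕ) → f j a = 0)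
    (hdf0 : ∀ j : Fin n, k ≤ (j : ℕ) → fderiv ℝ (f j) a = 0)
    (hindep : ∀ c : Fin n → ℝ,
      (∀ᶠ t in nhds a,
        (∑ j ∈ Finset.univ.filter (fun j : Fin n => k ≤ (j : ℕ)), c j * f j t) = 0) →
      ∀ j : Fin n, k ≤ (j : ℕ) → c j = 0)
    (x : Fin n → ℝ) :
    Submodule.span ℝ
      ({v | ∃ m : Fin k, v = etaField n k m (x, a)} ∪
       {v | ∃ ℓ : Fin k, v = xiField n k hkn.le f ℓ (x, a)} ∪
       {v | ∃ L : List (Fin k), L ≠ [] ∧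
          ∃ ℓ : Fin k, v = iterBracket n k hkn.le f L ℓ (x, a)}) = ⊤ := by
  rw [← Submodule.dualAnnihilator_eq_bot_iff, Submodule.eq_bot_iff]
  intro φ hφ
  have hS := fun v hv => (Submodule.mem_dualAnnihilator φ).1 hφ v (Submodule.subset_span hv)
  exact eq_zero_of_map_fields_eq_zero hkn.le hU haU hf hf0 hdf0 hindep x φ
    (fun m => hS _ (.inl (.inl ⟨m, rfl⟩))) (fun ℓ => hS _ (.inl (.inr ⟨ℓ, rfl⟩)))
    (fun L hL ℓ => hS _ (.inr ⟨L, hL, ℓ, rfl⟩))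

/-- Assume moreover that the `f_j` are real-analytic on `U`,
vanish to second order at `a ∈ U`, and have linearly independent germs at `a`
(no nontrivial real linear combination vanishes on a neighbourhood of `a`).
Then for every `x ∈ ℝⁿ` the values at `(x,a)` of the fields `η^m`, `ξ^ℓ`
together with the values of all iterated brackets span all of `ℝⁿ × ℝᵏ`. -/
theorem stmt_3 {n k : ℕ} (hk : 1 ≤ k) (hkn : k < n)
    (U : Set (Fin k → ℝ)) (hU : IsOpen U) (a : Fin k → ℝ) (haU : a ∈ U)
    (f : Fin n → (Fin k → ℝ) → ℝ)
    (hf : ∀ j : Fin n, k ≤ (j : ℕ) → AnalyticOnNhd ℝ (f j) U)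
    (hf0 : ∀ j : Fin n, k ≤ (j : ℕ) → f j a = 0)
    (hdf0 : ∀ j : Fin n, k ≤ (j : ℕ) → fderiv ℝ (f j) a = 0)
    (hindep : ∀ c : Fin n → ℝ,
      (∀ᶠ t in nhds a,
        (∑ j ∈ Finset.univ.filter (fun j : Fin n => k ≤ (j : ℕ)), c j * f j t) = 0) →
      ∀ j : Fin n, k ≤ (j : ℕ) → c j = 0)
    (x : Fin n → ℝ) :
    Submodule.span ℝ
      ({v | ∃ m : Fin k, v = etaField n k m (x, a)} ∪
       {v | ∃ ℓ : Fin k, v = xiField n k hkn.le f ℓ (x, a)} ∪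
       {v | ∃ L : List (Fin k), L ≠ [] ∧
          ∃ ℓ : Fin k, v = iterBracket n k hkn.le f L ℓ (x, a)}) = ⊤ :=
  stmt_3_general hkn U hU a haU f hf hf0 hdf0 hindep x
end

section
/- Let r ≥ 1 and α ∈ ℂʳ. Define the holomorphic vector field ξ₀ : ℂʳ → ℂʳ by ξ₀(z) = α − ⟨z, α⟩ z, and for each diagonal matrix u ∈ ℂ^{r×r} with purely imaginary diagonal entries satisfying α_k · u_{kk} = 0 for all k, define ξ_u(z) = z·u (row vector times matrix). Then these fields pairwise commute: [ξ₀, ξ_u] = 0 for every such u, and [ξ_u, ξ_{u'}] = 0 for any two such diagonal matrices u, u'. -/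
/-!
For a continuous linear vector field `L` and `ξ(w) = a - g(w) w` with `g` linear, the bracket
works out to `[ξ, L](z) = L a + g(L z) z`. For `ξ₀` and `L = ξ_u`, both terms vanish since `u` is
diagonal with `α_k u_kk = 0`. Two linear fields `ξ_u, ξ_u'` have bracket `z (u u' - u' u)`, which
vanishes since diagonal matrices commute.
-/

open VectorField Matrix

section LieBracket

variable {𝕜 E : Type*} [NontriviallyNormedField 𝕜] [NormedAddCommGroup E] [NormedSpace 𝕜 E]

lemma VectorField.lieBracket_continuousLinearMap (L M : E →L[𝕜] E) (z : E) :
    lieBracket 𝕜 L M z = M (L z) - L (M z) := by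
  simp only [lieBracket, L.fderiv, M.fderiv]

lemma hasFDerivAt_sub_smul_self (a : E) (g : E →L[𝕜] 𝕜) (z : E) :
    HasFDerivAt (fun w ↦ a - g w • w) (-(g z • ContinuousLinearMap.id 𝕜 E + g.smulRight z)) z :=
  (g.hasFDerivAt.smul (hasFDerivAt_id z)).const_sub a

lemma VectorField.lieBracket_sub_smul_self_continuousLinearMap (a : E) (g : E →L[𝕜] 𝕜)
    (L : E →L[𝕜] E) (z : E) :
    lieBracket 𝕜 (fun w ↦ a - g w • w) L z = L a + g (L z) • z := by
  simp only [lieBracket, L.fderiv, (hasFDerivAt_sub_smul_self a g z).fderiv, map_sub, map_smul,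
    neg_add_rev, _root_.add_apply, _root_.neg_apply, _root_.smul_apply,
    ContinuousLinearMap.smulRight_apply, ContinuousLinearMap.id_apply]
  abel

end LieBracket

namespace Matrix

variable {n R : Type*} [Fintype n] [DecidableEq n]

lemma IsDiag.commute [CommSemiring R] {u v : Matrix n n R} (hu : u.IsDiag) (hv : v.IsDiag) :
    Commute u v := by
  rw [← hu.diagonal_diag, ← hv.diagonal_diag]
  exact commute_diagonal _ _

variable [NonUnitalNonAssocSemiring R]

lemma IsDiag.vecMul_eq {u : Matrix n n R} (hu : u.IsDiag) (v : n → R) :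
    v ᵥ* u = fun i ↦ v i * u i i := by
  conv_lhs => rw [← hu.diagonal_diag]
  exact funext (vecMul_diagonal v _)

lemma IsDiag.vecMul_eq_zero {u : Matrix n n R} (hu : u.IsDiag) {a : n → R}
    (ha : ∀ i, a i * u i i = 0) : a ᵥ* u = 0 := by
  rw [hu.vecMul_eq]
  exact funext ha

lemma IsDiag.vecMul_dotProduct_star_eq_zero [StarRing R] [NoZeroDivisors R] {u : Matrix n n R}
    (hu : u.IsDiag) {a : n → R} (ha : ∀ i, a i * u i i = 0) (v : n → R) :
    (v ᵥ* u) ⬝ᵥ star a = 0 := by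
  rw [hu.vecMul_eq]
  refine Finset.sum_eq_zero fun i _ ↦ ?_
  rcases mul_eq_zero.1 (ha i) with h | h <;> simp [h]

end Matrix

theorem stmt_5_general {r : ℕ} (α : Fin r → ℂ) :
    (∀ u : Matrix (Fin r) (Fin r) ℂ, u.IsDiag → (∀ i, (u i i).re = 0) →
      (∀ i, α i * u i i = 0) →
      ∀ z : Fin r → ℂ,
        fderiv ℂ (fun w : Fin r → ℂ => Matrix.vecMul w u) z
            ((fun w : Fin r → ℂ => α - (∑ j, w j * (starRingEnd ℂ) (α j)) • w) z) -
          fderiv ℂ (fun w : Fin r → ℂ => α - (∑ j, w j * (starRingEnd ℂ) (α j)) • w) z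
            (Matrix.vecMul z u) = 0) ∧
    (∀ u u' : Matrix (Fin r) (Fin r) ℂ, u.IsDiag → u'.IsDiag →
      (∀ i, (u i i).re = 0) → (∀ i, (u' i i).re = 0) →
      (∀ i, α i * u i i = 0) → (∀ i, α i * u' i i = 0) →
      ∀ z : Fin r → ℂ,
        fderiv ℂ (fun w : Fin r → ℂ => Matrix.vecMul w u') z (Matrix.vecMul z u) -
          fderiv ℂ (fun w : Fin r → ℂ => Matrix.vecMul w u) z (Matrix.vecMul z u') = 0) := by
  refine ⟨fun u hu _ hαu z ↦ ?_, fun u u' hu hu' _ _ _ _ z ↦ ?_⟩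
  · let g := ((dotProductBilin ℂ ℂ).flip (star α)).toContinuousLinearMap
    let L := (vecMulLinear u).toContinuousLinearMap
    change lieBracket ℂ (fun w ↦ α - g w • w) L z = 0
    rw [lieBracket_sub_smul_self_continuousLinearMap]
    simp [g, L, hu.vecMul_eq_zero hαu, hu.vecMul_dotProduct_star_eq_zero hαu]
  · change lieBracket ℂ (vecMulLinear u).toContinuousLinearMap
      (vecMulLinear u').toContinuousLinearMap z = 0
    rw [lieBracket_continuousLinearMap]
    simp [vecMul_vecMul, (hu.commute hu').eq]

/-- Let `α ∈ ℂʳ`, let `ξ₀(z) = α − ⟨z,α⟩z`, and for each diagonal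
matrix `u` with purely imaginary diagonal entries satisfying `α_k u_{kk} = 0` for
all `k`, let `ξ_u(z) = z·u`. Then these holomorphic vector fields pairwise commute:
`[ξ₀, ξ_u] = 0` and `[ξ_u, ξ_{u'}] = 0`, where `[X,Y](z) = (DY)_z(X z) − (DX)_z(Y z)`. -/
theorem stmt_5 {r : ℕ} (hr : 1 ≤ r) (α : Fin r → ℂ) :
    (∀ u : Matrix (Fin r) (Fin r) ℂ, u.IsDiag → (∀ i, (u i i).re = 0) →
      (∀ i, α i * u i i = 0) →
      ∀ z : Fin r → ℂ,
        fderiv ℂ (fun w : Fin r → ℂ => Matrix.vecMul w u) z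
            ((fun w : Fin r → ℂ => α - (∑ j, w j * (starRingEnd ℂ) (α j)) • w) z) -
          fderiv ℂ (fun w : Fin r → ℂ => α - (∑ j, w j * (starRingEnd ℂ) (α j)) • w) z
            (Matrix.vecMul z u) = 0) ∧
    (∀ u u' : Matrix (Fin r) (Fin r) ℂ, u.IsDiag → u'.IsDiag →
      (∀ i, (u i i).re = 0) → (∀ i, (u' i i).re = 0) →
      (∀ i, α i * u i i = 0) → (∀ i, α i * u' i i = 0) →
      ∀ z : Fin r → ℂ,
        fderiv ℂ (fun w : Fin r → ℂ => Matrix.vecMul w u') z (Matrix.vecMul z u) -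
          fderiv ℂ (fun w : Fin r → ℂ => Matrix.vecMul w u) z (Matrix.vecMul z u') = 0) :=
  stmt_5_general α
end

section
/- Let r ≥ 2 and set F = {x ∈ ℝʳ : Σ_{k=1}^r exp(2 x_k) = 1} and Π₋ = {y ∈ ℝʳ : sinh(y₁) = Σ_{k=2}^r exp(y_k)}. Then the affine map A : ℝʳ → ℝʳ given by A(x) = (−x₁, 2x₂ − x₁ − log 2, 2x₃ − x₁ − log 2, …, 2x_r − x₁ − log 2) restricts to a bijection from F onto Π₋. -/
/-!
The map `A` has the affine inverse `B y = (-y₁, (y_k - y₁ + log 2) / 2)`, and a direct computation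
gives `sinh (A x)₁ - Σ_{k ≥ 2} exp (A x)_k = e^{-x₁} / 2 · (1 - Σ_k exp (2 x_k))`. Since the factor
`e^{-x₁} / 2` never vanishes, `A x ∈ Π₋` exactly when `x ∈ F`.
-/

open Real Finset

namespace LogSphere

variable {ι : Type*} [DecidableEq ι]

noncomputable def toPiMinus (z : ι) (x : ι → ℝ) : ι → ℝ :=
  fun k => if k = z then -x z else 2 * x k - x z - log 2

noncomputable def ofPiMinus (z : ι) (y : ι → ℝ) : ι → ℝ :=
  fun k => if k = z then -y z else (y k - y z + log 2) / 2

theorem toPiMinus_ofPiMinus (z : ι) (y : ι → ℝ) : toPiMinus z (ofPiMinus z y) = y := by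
  funext k
  by_cases hk : k = z
  · subst hk
    simp [toPiMinus, ofPiMinus]
  · simp only [toPiMinus, ofPiMinus, if_neg hk, ↓reduceIte]
    ring

theorem ofPiMinus_toPiMinus (z : ι) (x : ι → ℝ) : ofPiMinus z (toPiMinus z x) = x := by
  funext k
  by_cases hk : k = z
  · subst hk
    simp [toPiMinus, ofPiMinus]
  · simp only [toPiMinus, ofPiMinus, if_neg hk, ↓reduceIte]
    ring

variable [Fintype ι]

variable (ι) in
def logSphere : Set (ι → ℝ) := {x | ∑ k, exp (2 * x k) = 1}

def piMinus (z : ι) : Set (ι → ℝ) := {y | sinh (y z) = ∑ k ∈ univ.filter (fun k => k ≠ z), exp (y k)}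

theorem sinh_sub_sum_exp_toPiMinus (z : ι) (x : ι → ℝ) :
    sinh (toPiMinus z x z) - ∑ k ∈ univ.filter (fun k => k ≠ z), exp (toPiMinus z x k) =
      exp (-x z) / 2 * (1 - ∑ k, exp (2 * x k)) := by
  have hterm : ∀ k ∈ univ.erase z, exp (toPiMinus z x k) = exp (-x z) / 2 * exp (2 * x k) := by
    intro k hk
    rw [toPiMinus, if_neg (ne_of_mem_erase hk), sub_sub, exp_sub, exp_add, exp_log two_pos,
      exp_neg]
    field_simp
  have hsq : exp (-x z) * exp (2 * x z) = exp (x z) := by rw [← exp_add]; ring_nf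
  rw [filter_ne', sum_congr rfl hterm, ← mul_sum, ← add_sum_erase _ _ (mem_univ z),
    toPiMinus, if_pos rfl, sinh_eq, neg_neg]
  linear_combination hsq / 2

theorem bijOn_toPiMinus (z : ι) :
    Set.BijOn (toPiMinus z) (logSphere ι) (piMinus z) := by
  refine Set.InvOn.bijOn ⟨fun x _ => ofPiMinus_toPiMinus z x, fun y _ => toPiMinus_ofPiMinus z y⟩
    (fun x hx => ?_) (fun y hy => ?_)
  · have hdefect := sinh_sub_sum_exp_toPiMinus z x
    rwa [show ∑ k, exp (2 * x k) = 1 from hx, sub_self, mul_zero, sub_eq_zero] at hdefect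
  · have hdefect := sinh_sub_sum_exp_toPiMinus z (ofPiMinus z y)
    rw [toPiMinus_ofPiMinus, sub_eq_zero.mpr hy, zero_eq_mul] at hdefect
    exact (sub_eq_zero.mp (hdefect.resolve_left (by positivity))).symm

end LogSphere

/-- For `r ≥ 2`, the affine map
`A(x) = (−x₁, 2x₂ − x₁ − log 2, …, 2x_r − x₁ − log 2)` restricts to a bijection
from `F = {x : Σ_k exp(2x_k) = 1}` onto `Π₋ = {y : sinh y₁ = Σ_{k≥2} exp y_k}`. -/
theorem stmt_7 {r : ℕ} (hr : 2 ≤ r) :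
    Set.BijOn
      (fun x : Fin r → ℝ => fun k : Fin r =>
        if k = (⟨0, by omega⟩ : Fin r) then -x ⟨0, by omega⟩
        else 2 * x k - x ⟨0, by omega⟩ - Real.log 2)
      {x : Fin r → ℝ | ∑ k, Real.exp (2 * x k) = 1}
      {y : Fin r → ℝ | Real.sinh (y ⟨0, by omega⟩) =
        ∑ k ∈ Finset.univ.filter (fun k : Fin r => k ≠ ⟨0, by omega⟩), Real.exp (y k)} :=
  LogSphere.bijOn_toPiMinus _
end

section
/- Let r ≥ 2 and 1 ≤ s ≤ r. For z ∈ ℂʳ define w ∈ ℂʳ by w₁ = z₁ − (1/2)·Σ_{j=s+1}^r z_j², w_k = exp(z_k) for 2 ≤ k ≤ s, and w_j = z_j for s < j ≤ r. Then w₁ + conj(w₁) = Σ_{k=2}^r |w_k|² holds if and only if 2 Re z₁ = Σ_{k=2}^s exp(2 Re z_k) + 2·Σ_{j=s+1}^r (Re z_j)². In particular the preimage of the quadric Q under the map z ↦ w is a tube: its membership condition depends only on the real parts of the coordinates of z. -/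
/-!
Since `|exp ζ|² = exp (2 Re ζ)` and `|ζ|² + Re (ζ²) = 2 (Re ζ)²`, the defining equation
`2 Re w₁ = Σ_{k ≥ 2} |w_k|²` of `Q`, pulled back along `z ↦ w`, becomes an equation between
real parts of the `z_k` alone: the quadratic correction `-½ Σ z_j²` in `w₁` cancels exactly the
imaginary parts `(Im z_j)²` contributed by `|z_j|²`.
-/

open Complex Finset

namespace Complex

lemma normSq_exp (z : ℂ) : normSq (exp z) = Real.exp (2 * z.re) := by
  rw [normSq_eq_norm_sq, norm_exp, sq, ← Real.exp_add, two_mul]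

lemma normSq_add_re_sq (z : ℂ) : normSq z + (z ^ 2).re = 2 * z.re ^ 2 := by
  rw [normSq_apply, sq z, mul_re]
  ring

lemma add_conj_eq_ofReal_iff {w : ℂ} {x : ℝ} : w + starRingEnd ℂ w = x ↔ 2 * w.re = x := by
  rw [add_conj, ofReal_inj]

end Complex

lemma Fin.sum_filter_ne_zero_eq_add {M : Type*} [AddCommMonoid M] {r s : ℕ} (h0 : 0 < r)
    (hs : 1 ≤ s) (f : Fin r → M) :
    ∑ k ∈ univ.filter (· ≠ ⟨0, h0⟩), f k =
      ∑ k ∈ univ.filter (fun k : Fin r => 1 ≤ (k : ℕ) ∧ (k : ℕ) < s), f k +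
        ∑ k ∈ univ.filter (fun k : Fin r => s ≤ (k : ℕ)), f k := by
  rw [← sum_filter_add_sum_filter_not _ (fun k : Fin r => (k : ℕ) < s), filter_filter,
    filter_filter]
  congr 1 <;> refine sum_congr (filter_congr fun k _ => ?_) fun _ _ => rfl <;>
    simp only [ne_eq, Fin.ext_iff] <;> omega

section Hyperquadric

variable {r : ℕ} (h0 : 0 < r)

def hyperquadric : Set (Fin r → ℂ) :=
  {w | w ⟨0, h0⟩ + starRingEnd ℂ (w ⟨0, h0⟩) =
    ∑ k ∈ univ.filter (· ≠ ⟨0, h0⟩), (normSq (w k) : ℂ)}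

lemma mem_hyperquadric_iff {w : Fin r → ℂ} :
    w ∈ hyperquadric h0 ↔
      2 * (w ⟨0, h0⟩).re = ∑ k ∈ univ.filter (· ≠ ⟨0, h0⟩), normSq (w k) := by
  rw [hyperquadric, Set.mem_ofPred_eq, ← ofReal_sum, add_conj_eq_ofReal_iff]

/-- Coordinates are `0`-based: `w₁` is `w 0`, the exponential block `2 ≤ k ≤ s` is
`1 ≤ k < s` and the quadratic block `s < j ≤ r` is `s ≤ j < r`. -/
noncomputable def tubeMap (s : ℕ) (z : Fin r → ℂ) : Fin r → ℂ := fun k =>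
  if k = ⟨0, h0⟩ then
    z ⟨0, h0⟩ - (1 / 2 : ℂ) * ∑ j ∈ univ.filter (fun j : Fin r => s ≤ (j : ℕ)), z j ^ 2
  else if (k : ℕ) < s then exp (z k) else z k

lemma two_mul_re_tubeMap_zero (s : ℕ) (z : Fin r → ℂ) :
    2 * (tubeMap h0 s z ⟨0, h0⟩).re =
      2 * (z ⟨0, h0⟩).re - ∑ j ∈ univ.filter (fun j : Fin r => s ≤ (j : ℕ)), (z j ^ 2).re := by
  rw [tubeMap, if_pos rfl, sub_re, one_div, ← ofReal_ofNat, ← ofReal_inv, re_ofReal_mul, re_sum]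
  ring

lemma sum_normSq_tubeMap {s : ℕ} (hs : 1 ≤ s) (z : Fin r → ℂ) :
    ∑ k ∈ univ.filter (· ≠ ⟨0, h0⟩), normSq (tubeMap h0 s z k) =
      ∑ k ∈ univ.filter (fun k : Fin r => 1 ≤ (k : ℕ) ∧ (k : ℕ) < s), Real.exp (2 * (z k).re) +
        ∑ j ∈ univ.filter (fun j : Fin r => s ≤ (j : ℕ)), normSq (z j) := by
  rw [Fin.sum_filter_ne_zero_eq_add h0 hs]
  have hne {k : Fin r} (hk : 1 ≤ (k : ℕ)) : k ≠ ⟨0, h0⟩ := by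
    simp only [ne_eq, Fin.ext_iff]
    omega
  congr 1 <;> refine sum_congr rfl fun k hk => ?_ <;> rw [mem_filter] at hk
  · rw [tubeMap, if_neg (hne hk.2.1), if_pos hk.2.2, normSq_exp]
  · rw [tubeMap, if_neg (hne (hs.trans hk.2)), if_neg hk.2.not_gt]

theorem tubeMap_mem_hyperquadric_iff {s : ℕ} (hs : 1 ≤ s) (z : Fin r → ℂ) :
    tubeMap h0 s z ∈ hyperquadric h0 ↔
      2 * (z ⟨0, h0⟩).re =
        ∑ k ∈ univ.filter (fun k : Fin r => 1 ≤ (k : ℕ) ∧ (k : ℕ) < s), Real.exp (2 * (z k).re) +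
          2 * ∑ j ∈ univ.filter (fun j : Fin r => s ≤ (j : ℕ)), (z j).re ^ 2 := by
  have hquad : ∑ j ∈ univ.filter (fun j : Fin r => s ≤ (j : ℕ)), (normSq (z j) + (z j ^ 2).re) =
      2 * ∑ j ∈ univ.filter (fun j : Fin r => s ≤ (j : ℕ)), (z j).re ^ 2 := by
    simp only [normSq_add_re_sq, mul_sum]
  rw [mem_hyperquadric_iff, two_mul_re_tubeMap_zero, sum_normSq_tubeMap h0 hs, ← hquad,
    sum_add_distrib]
  constructor <;> intro h <;> linarith

theorem tubeMap_mem_hyperquadric_congr_re {s : ℕ} (hs : 1 ≤ s) {z z' : Fin r → ℂ}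
    (h : ∀ k, (z k).re = (z' k).re) :
    tubeMap h0 s z ∈ hyperquadric h0 ↔ tubeMap h0 s z' ∈ hyperquadric h0 := by
  simp only [tubeMap_mem_hyperquadric_iff h0 hs, h]

end Hyperquadric

/-- Let `r ≥ 2` and `1 ≤ s ≤ r`. For `z ∈ ℂʳ` set
`w₁ = z₁ − ½ Σ_{j>s} z_j²`, `w_k = exp z_k` for `2 ≤ k ≤ s`, `w_j = z_j` for
`j > s`. Then `w ∈ Q` iff `2 Re z₁ = Σ_{2≤k≤s} exp(2 Re z_k) + 2 Σ_{j>s} (Re z_j)²`;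
in particular the preimage of `Q` under `z ↦ w` only depends on the real parts of
the coordinates of `z` (it is a tube). -/
theorem stmt_10 {r : ℕ} (hr : 2 ≤ r) (s : ℕ) (hs1 : 1 ≤ s) :
    let i0 : Fin r := ⟨0, by omega⟩
    let Q : Set (Fin r → ℂ) := {w | w i0 + (starRingEnd ℂ) (w i0) =
      ∑ k ∈ Finset.univ.filter (fun k : Fin r => k ≠ i0), (Complex.normSq (w k) : ℂ)}
    let Φ : (Fin r → ℂ) → (Fin r → ℂ) := fun z k =>
      if k = i0 then
        z i0 - (1 / 2 : ℂ) *
          ∑ j ∈ Finset.univ.filter (fun j : Fin r => s ≤ (j : ℕ)), (z j) ^ 2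
      else if (k : ℕ) < s then Complex.exp (z k) else z k
    (∀ z : Fin r → ℂ,
      (Φ z ∈ Q ↔
        2 * (z i0).re =
          (∑ k ∈ Finset.univ.filter (fun k : Fin r => 1 ≤ (k : ℕ) ∧ (k : ℕ) < s),
            Real.exp (2 * (z k).re)) +
          2 * ∑ j ∈ Finset.univ.filter (fun j : Fin r => s ≤ (j : ℕ)), ((z j).re) ^ 2)) ∧
    (∀ z : Fin r → ℂ, ∀ y : Fin r → ℝ,
      (Φ z ∈ Q ↔ Φ (fun k => z k + (y k : ℂ) * Complex.I) ∈ Q)) := by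
  intro i0 Q Φ
  have h0 : 0 < r := by omega
  exact ⟨tubeMap_mem_hyperquadric_iff h0 hs1, fun z y =>
    tubeMap_mem_hyperquadric_congr_re h0 hs1 fun k => by simp⟩
end

section
/- Let p ≥ 1 and let j, k ≥ 0 be integers with j + k ≤ p. Let T = T^p_{j,k} = { z ∈ ℂ^{p×p} : (z − zᴴ)/(2i) has type (j,k) }, i.e., the tube over the cone of hermitian matrices of type (j,k). Then: (a) for every g ∈ GL(p, ℂ) and every hermitian v ∈ ℂ^{p×p}, the affine map z ↦ g·z·gᴴ + v maps T bijectively onto T; and (b) these affine maps act transitively on T: for any z, z' ∈ T there exist g ∈ GL(p, ℂ) and a hermitian v with z' = g·z·gᴴ + v. In particular every tube T^p_{j,k} is affinely homogeneous. -/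
/-
Since the hermitian imaginary part transforms as `Im (g z gᴴ + v) = g (Im z) gᴴ`, part (a) is
Sylvester's law of inertia: a congruence `y ↦ g y gᴴ` with `g` invertible preserves the numbers of
positive and negative eigenvalues of a hermitian `y`. For part (b), a hermitian matrix is
congruent to the diagonal matrix of the signs of its eigenvalues, and two such sign matrices of the
same type differ by a permutation; so if `z, z' ∈ T` then `Im z' = g (Im z) gᴴ` for some invertible
`g`, and `v = z' - g z gᴴ` has imaginary part zero, i.e. is hermitian.
-/

/-- A hermitian matrix `y` has type `(j,k)` if, counted with multiplicity,
exactly `j` of its eigenvalues are positive and exactly `k` are negative. -/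
noncomputable def hasType {p : ℕ} (y : Matrix (Fin p) (Fin p) ℂ) (j k : ℕ) : Prop :=
  ∃ hy : y.IsHermitian,
    (Finset.univ.filter fun i => 0 < hy.eigenvalues i).card = j ∧
    (Finset.univ.filter fun i => hy.eigenvalues i < 0).card = k

open Matrix Finset

lemma Equiv.Perm.exists_comp_eq_of_card_fiber_eq {α β : Type*} [Fintype α] [DecidableEq β]
    {f g : α → β} (h : ∀ b, #{a | f a = b} = #{a | g a = b}) :
    ∃ σ : Equiv.Perm α, ∀ a, f (σ a) = g a :=
  ⟨Equiv.ofFiberEquiv fun b => Fintype.equivOfCardEq <| by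
    simp only [Fintype.card_subtype, h], Equiv.ofFiberEquiv_map _⟩

section

variable {n : Type*} [Fintype n]

lemma card_eq_zero_add_card_neg_add_card_pos (μ : n → ℝ) :
    #{i | μ i = 0} + #{i | μ i < 0} + #{i | 0 < μ i} = Fintype.card n := by
  have h := card_eq_sum_card_fiberwise (f := fun i => SignType.sign (μ i)) (s := univ)
    (t := univ) fun _ _ => mem_coe.mpr (mem_univ _)
  rw [card_univ, show (univ : Finset SignType) = {0, -1, 1} from rfl] at h
  simpa [sign_eq_neg_one_iff, sign_eq_one_iff, add_assoc] using h.symm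

lemma card_sign_eq_of_card_pos_eq_of_card_neg_eq {μ μ' : n → ℝ}
    (hpos : #{i | 0 < μ i} = #{i | 0 < μ' i}) (hneg : #{i | μ i < 0} = #{i | μ' i < 0})
    (s : SignType) : #{i | SignType.sign (μ i) = s} = #{i | SignType.sign (μ' i) = s} := by
  rcases s.trichotomy with rfl | rfl | rfl
  · simpa only [sign_eq_neg_one_iff] using hneg
  · have := card_eq_zero_add_card_neg_add_card_pos μ
    have := card_eq_zero_add_card_neg_add_card_pos μ'
    simp only [sign_eq_zero_iff]
    omega
  · simpa only [sign_eq_one_iff] using hpos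

end

namespace Matrix

section Congruence

variable {𝕜 n : Type*} [RCLike 𝕜] [Fintype n]

lemma star_dotProduct_conj_mulVec (g y : Matrix n n 𝕜) (x : n → 𝕜) :
    star x ⬝ᵥ (g * y * gᴴ) *ᵥ x = star (gᴴ *ᵥ x) ⬝ᵥ y *ᵥ (gᴴ *ᵥ x) := by
  rw [← mulVec_mulVec, ← mulVec_mulVec, dotProduct_mulVec, star_mulVec,
    conjTranspose_conjTranspose]

variable [DecidableEq n]

def IsCongruent (y y' : Matrix n n 𝕜) : Prop :=
  ∃ g : Matrix n n 𝕜, IsUnit g ∧ y' = g * y * gᴴ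

lemma inv_conj_conj_cancel {g : Matrix n n 𝕜} (hg : IsUnit g)
    (z : Matrix n n 𝕜) : g⁻¹ * (g * z * gᴴ) * g⁻¹ᴴ = z := by
  have hdet := (isUnit_iff_isUnit_det g).mp hg
  simp only [Matrix.mul_assoc]
  rw [← conjTranspose_mul, nonsing_inv_mul _ hdet, conjTranspose_one, Matrix.mul_one,
    ← Matrix.mul_assoc, nonsing_inv_mul _ hdet, Matrix.one_mul]

lemma conj_inv_conj_cancel {g : Matrix n n 𝕜} (hg : IsUnit g) (z : Matrix n n 𝕜) :
    g * (g⁻¹ * z * g⁻¹ᴴ) * gᴴ = z := by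
  simpa [nonsing_inv_nonsing_inv _ ((isUnit_iff_isUnit_det g).mp hg)] using
    inv_conj_conj_cancel (isUnit_nonsing_inv_iff.mpr hg) z

lemma IsCongruent.trans {y y' y'' : Matrix n n 𝕜} :
    IsCongruent y y' → IsCongruent y' y'' → IsCongruent y y'' := by
  rintro ⟨g, hg, rfl⟩ ⟨g', hg', rfl⟩
  exact ⟨g' * g, hg'.mul hg, by simp only [conjTranspose_mul, Matrix.mul_assoc]⟩

lemma IsCongruent.symm {y y' : Matrix n n 𝕜} : IsCongruent y y' → IsCongruent y' y := by
  rintro ⟨g, hg, rfl⟩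
  exact ⟨g⁻¹, isUnit_nonsing_inv_iff.mpr hg, (inv_conj_conj_cancel hg y).symm⟩

lemma IsCongruent.neg {y y' : Matrix n n 𝕜} : IsCongruent y y' → IsCongruent (-y) (-y') := by
  rintro ⟨g, hg, rfl⟩
  exact ⟨g, hg, by rw [Matrix.mul_neg, Matrix.neg_mul]⟩

lemma star_dotProduct_conj_diagonal_mulVec (U : Matrix n n 𝕜) (μ : n → ℝ) (x : n → 𝕜) :
    star x ⬝ᵥ (U * diagonal (RCLike.ofReal ∘ μ) * Uᴴ) *ᵥ x
      = ((∑ i, μ i * ‖(Uᴴ *ᵥ x) i‖ ^ 2 : ℝ) : 𝕜) := by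
  rw [star_dotProduct_conj_mulVec]
  simp only [dotProduct, mulVec_diagonal, Pi.star_apply, Function.comp_apply,
    RCLike.ofReal_sum, RCLike.ofReal_mul, RCLike.ofReal_pow]
  refine Finset.sum_congr rfl fun i _ => ?_
  rw [← RCLike.conj_mul, RCLike.star_def]
  ring

lemma re_star_dotProduct_conj_diagonal_mulVec_pos {U : Matrix n n 𝕜} (hU : Uᴴ * U = 1)
    {μ : n → ℝ} {w : n → 𝕜} (hw : w ≠ 0) (hμ : ∀ i, w i ≠ 0 → 0 < μ i) :
    0 < RCLike.re (star (U *ᵥ w) ⬝ᵥ (U * diagonal (RCLike.ofReal ∘ μ) * Uᴴ) *ᵥ (U *ᵥ w)) := by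
  rw [star_dotProduct_conj_diagonal_mulVec, RCLike.ofReal_re, mulVec_mulVec, hU, one_mulVec]
  obtain ⟨i₀, hi₀⟩ := Function.ne_iff.mp hw
  refine Finset.sum_pos' (fun i _ => ?_) ⟨i₀, mem_univ _, mul_pos (hμ i₀ hi₀) (by positivity)⟩
  by_cases hi : w i = 0
  · simp [hi]
  · exact mul_nonneg (hμ i hi).le (sq_nonneg _)

lemma re_star_dotProduct_conj_diagonal_mulVec_nonpos (U : Matrix n n 𝕜) {μ : n → ℝ}
    {x : n → 𝕜} (hx : ∀ i, 0 < μ i → (Uᴴ *ᵥ x) i = 0) :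
    RCLike.re (star x ⬝ᵥ (U * diagonal (RCLike.ofReal ∘ μ) * Uᴴ) *ᵥ x) ≤ 0 := by
  rw [star_dotProduct_conj_diagonal_mulVec, RCLike.ofReal_re]
  refine Finset.sum_nonpos fun i _ => ?_
  by_cases hi : 0 < μ i
  · simp [hx i hi]
  · exact mul_nonpos_of_nonpos_of_nonneg (not_lt.mp hi) (sq_nonneg _)

lemma card_pos_le_of_isCongruent {y y' U U' : Matrix n n 𝕜} {μ μ' : n → ℝ} (hU : Uᴴ * U = 1)
    (hy : y = U * diagonal (RCLike.ofReal ∘ μ) * Uᴴ)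
    (hy' : y' = U' * diagonal (RCLike.ofReal ∘ μ') * U'ᴴ) (h : IsCongruent y y') :
    #{i | 0 < μ i} ≤ #{i | 0 < μ' i} := by
  -- Otherwise some `w ≠ 0` supported where `μ > 0` is sent by `U'ᴴ g⁻ᴴ U` to a vector vanishing
  -- where `μ' > 0`; the quadratic forms of `y` at `U w` and of `y'` at `g⁻ᴴ U w` then have
  -- opposite signs, although they are equal.
  obtain ⟨g, hg, hgy⟩ := h
  by_contra! hlt
  let L : ({i // 0 < μ i} → 𝕜) →ₗ[𝕜] ({i // 0 < μ' i} → 𝕜) :=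
    LinearMap.funLeft 𝕜 𝕜 Subtype.val ∘ₗ mulVecLin (U'ᴴ * g⁻¹ᴴ * U) ∘ₗ
      Function.ExtendByZero.linearMap 𝕜 Subtype.val
  obtain ⟨c, hc, hc0⟩ := Submodule.exists_mem_ne_zero_of_ne_bot
    (LinearMap.ker_ne_bot_of_finrank_lt (f := L) (by simpa [Fintype.card_subtype] using hlt))
  set w : n → 𝕜 := Function.extend Subtype.val c 0
  have hw : w ≠ 0 := fun h0 => hc0 <|
    Function.extend_injective Subtype.val_injective (0 : n → 𝕜) <| by
      simpa [Function.extend_zero] using h0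
  have hwμ : ∀ i, w i ≠ 0 → 0 < μ i := by
    intro i hi
    by_contra hμ
    exact hi (Function.extend_apply' _ _ _ fun ⟨a, ha⟩ => hμ (ha ▸ a.2))
  set x := g⁻¹ᴴ *ᵥ (U *ᵥ w)
  have hgx : gᴴ *ᵥ x = U *ᵥ w := by
    rw [mulVec_mulVec, ← conjTranspose_mul,
      nonsing_inv_mul _ ((isUnit_iff_isUnit_det g).mp hg), conjTranspose_one, one_mulVec]
  have hx : ∀ i, 0 < μ' i → (U'ᴴ *ᵥ x) i = 0 := fun i hi => by
    simp only [x, mulVec_mulVec, ← Matrix.mul_assoc]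
    exact congrFun (LinearMap.mem_ker.mp hc) ⟨i, hi⟩
  have hpos := re_star_dotProduct_conj_diagonal_mulVec_pos hU hw hwμ
  have hnonpos := re_star_dotProduct_conj_diagonal_mulVec_nonpos U' hx
  rw [← hy', hgy, star_dotProduct_conj_mulVec, hgx, hy] at hnonpos
  exact hpos.not_ge hnonpos

lemma card_pos_eq_of_isCongruent {y y' U U' : Matrix n n 𝕜} {μ μ' : n → ℝ} (hU : Uᴴ * U = 1)
    (hU' : U'ᴴ * U' = 1) (hy : y = U * diagonal (RCLike.ofReal ∘ μ) * Uᴴ)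
    (hy' : y' = U' * diagonal (RCLike.ofReal ∘ μ') * U'ᴴ) (h : IsCongruent y y') :
    #{i | 0 < μ i} = #{i | 0 < μ' i} :=
  (card_pos_le_of_isCongruent hU hy hy' h).antisymm (card_pos_le_of_isCongruent hU' hy' hy h.symm)

lemma neg_mul_diagonal_mul_conjTranspose (U : Matrix n n 𝕜) (μ : n → ℝ) :
    -(U * diagonal (RCLike.ofReal ∘ μ) * Uᴴ) = U * diagonal (RCLike.ofReal ∘ (-μ)) * Uᴴ := by
  rw [← Matrix.neg_mul, ← Matrix.mul_neg, diagonal_neg]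
  congr 3
  simp [funext_iff]

lemma card_neg_eq_of_isCongruent {y y' U U' : Matrix n n 𝕜} {μ μ' : n → ℝ} (hU : Uᴴ * U = 1)
    (hU' : U'ᴴ * U' = 1) (hy : y = U * diagonal (RCLike.ofReal ∘ μ) * Uᴴ)
    (hy' : y' = U' * diagonal (RCLike.ofReal ∘ μ') * U'ᴴ) (h : IsCongruent y y') :
    #{i | μ i < 0} = #{i | μ' i < 0} := by
  simpa using card_pos_eq_of_isCongruent hU hU'
    ((congrArg Neg.neg hy).trans (neg_mul_diagonal_mul_conjTranspose U μ))
    ((congrArg Neg.neg hy').trans (neg_mul_diagonal_mul_conjTranspose U' μ')) h.neg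

namespace IsHermitian

variable {y y' : Matrix n n 𝕜}

lemma eq_eigenvectorUnitary_mul_diagonal (hy : y.IsHermitian) :
    y = (hy.eigenvectorUnitary : Matrix n n 𝕜) * diagonal (RCLike.ofReal ∘ hy.eigenvalues) *
      (hy.eigenvectorUnitary : Matrix n n 𝕜)ᴴ := by
  simpa [Unitary.conjStarAlgAut_apply, star_eq_conjTranspose] using hy.spectral_theorem

lemma eigenvectorUnitary_conjTranspose_mul (hy : y.IsHermitian) :
    (hy.eigenvectorUnitary : Matrix n n 𝕜)ᴴ * hy.eigenvectorUnitary = 1 :=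
  Unitary.coe_star_mul_self _

lemma card_pos_eigenvalues_eq_of_isCongruent (hy : y.IsHermitian) (hy' : y'.IsHermitian)
    (h : IsCongruent y y') : #{i | 0 < hy.eigenvalues i} = #{i | 0 < hy'.eigenvalues i} :=
  card_pos_eq_of_isCongruent hy.eigenvectorUnitary_conjTranspose_mul
    hy'.eigenvectorUnitary_conjTranspose_mul hy.eq_eigenvectorUnitary_mul_diagonal
    hy'.eq_eigenvectorUnitary_mul_diagonal h

lemma card_neg_eigenvalues_eq_of_isCongruent (hy : y.IsHermitian) (hy' : y'.IsHermitian)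
    (h : IsCongruent y y') : #{i | hy.eigenvalues i < 0} = #{i | hy'.eigenvalues i < 0} :=
  card_neg_eq_of_isCongruent hy.eigenvectorUnitary_conjTranspose_mul
    hy'.eigenvectorUnitary_conjTranspose_mul hy.eq_eigenvectorUnitary_mul_diagonal
    hy'.eq_eigenvectorUnitary_mul_diagonal h

end IsHermitian

lemma isCongruent_diagonal_sign_diagonal (μ : n → ℝ) :
    IsCongruent (diagonal fun i => (SignType.sign (μ i) : 𝕜)) (diagonal (RCLike.ofReal ∘ μ)) := by
  -- any nonzero value of `e` on the kernel of `μ` keeps the scaling invertible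
  set e : n → ℝ := fun i => if μ i = 0 then 1 else √|μ i|
  have he : ∀ i, e i ≠ 0 := fun i => by
    by_cases hi : μ i = 0 <;> simp [e, hi]
  have hμ : ∀ i, e i * SignType.sign (μ i) * e i = μ i := fun i => by
    by_cases hi : μ i = 0
    · simp [hi]
    · simp only [e, if_neg hi]
      rw [mul_right_comm, Real.mul_self_sqrt (abs_nonneg _), mul_comm, sign_mul_abs]
  refine ⟨diagonal fun i => (e i : 𝕜), isUnit_diagonal.mpr <| Pi.isUnit_iff.mpr fun i =>
    isUnit_iff_ne_zero.mpr (RCLike.ofReal_ne_zero.mpr (he i)), ?_⟩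
  rw [diagonal_conjTranspose, diagonal_mul_diagonal, diagonal_mul_diagonal]
  congr 1
  funext i
  simp only [Function.comp_apply, Pi.star_apply, RCLike.star_def, RCLike.conj_ofReal]
  conv_lhs => rw [← hμ i]
  push_cast
  congr 2
  exact SignType.map_cast' _ (by simp) (by simp) (by simp) _

lemma isCongruent_diagonal_comp_perm (d : n → 𝕜) (σ : Equiv.Perm n) :
    IsCongruent (diagonal d) (diagonal (d ∘ σ)) := by
  refine ⟨σ.permMatrix 𝕜, (isUnit_iff_isUnit_det _).mpr (by simp), ?_⟩
  rw [conjTranspose_permMatrix, PEquiv.toMatrix_toPEquiv_mul, PEquiv.mul_toMatrix_toPEquiv,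
    submatrix_submatrix]
  exact (submatrix_diagonal_equiv d σ).symm

lemma IsHermitian.isCongruent_diagonal_sign_eigenvalues {y : Matrix n n 𝕜} (hy : y.IsHermitian) :
    IsCongruent (diagonal fun i => (SignType.sign (hy.eigenvalues i) : 𝕜)) y :=
  (isCongruent_diagonal_sign_diagonal hy.eigenvalues).trans
    ⟨hy.eigenvectorUnitary, Unitary.isUnit_coe, hy.eq_eigenvectorUnitary_mul_diagonal⟩

end Congruence

section ImaginaryPart

variable {n : Type*}

noncomputable def imPart (z : Matrix n n ℂ) : Matrix n n ℂ :=
  (2 * Complex.I)⁻¹ • (z - zᴴ)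

lemma imPart_add (z w : Matrix n n ℂ) : imPart (z + w) = imPart z + imPart w := by
  rw [imPart, imPart, imPart, ← smul_add, conjTranspose_add, add_sub_add_comm]

lemma imPart_eq_zero_iff {v : Matrix n n ℂ} : imPart v = 0 ↔ v.IsHermitian := by
  simp [imPart, Complex.I_ne_zero, sub_eq_zero, IsHermitian, eq_comm]

lemma imPart_conj [Fintype n] (g z : Matrix n n ℂ) : imPart (g * z * gᴴ) = g * imPart z * gᴴ := by
  rw [imPart, imPart, conjTranspose_mul, conjTranspose_mul, conjTranspose_conjTranspose,
    Matrix.mul_smul, Matrix.smul_mul, Matrix.mul_sub, Matrix.sub_mul]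
  simp only [Matrix.mul_assoc]

end ImaginaryPart

end Matrix

lemma hasType.isCongruent {p j k : ℕ} {y y' : Matrix (Fin p) (Fin p) ℂ} (h : hasType y j k)
    (hyy' : IsCongruent y y') : hasType y' j k := by
  obtain ⟨hy, hj, hk⟩ := h
  have hy' : y'.IsHermitian := by
    obtain ⟨g, -, rfl⟩ := hyy'
    exact isHermitian_mul_mul_conjTranspose g hy
  exact ⟨hy', (hy.card_pos_eigenvalues_eq_of_isCongruent hy' hyy').symm.trans hj,
    (hy.card_neg_eigenvalues_eq_of_isCongruent hy' hyy').symm.trans hk⟩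

lemma isCongruent_of_hasType {p j k : ℕ} {y y' : Matrix (Fin p) (Fin p) ℂ} (h : hasType y j k)
    (h' : hasType y' j k) : IsCongruent y y' := by
  obtain ⟨hy, hj, hk⟩ := h
  obtain ⟨hy', hj', hk'⟩ := h'
  obtain ⟨σ, hσ⟩ := Equiv.Perm.exists_comp_eq_of_card_fiber_eq
    (card_sign_eq_of_card_pos_eq_of_card_neg_eq (hj.trans hj'.symm) (hk.trans hk'.symm))
  have hsign : (fun i => (SignType.sign (hy.eigenvalues i) : ℂ)) ∘ σ =
      fun i => (SignType.sign (hy'.eigenvalues i) : ℂ) := funext fun i => by simp [hσ]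
  have := isCongruent_diagonal_comp_perm (fun i => (SignType.sign (hy.eigenvalues i) : ℂ)) σ
  rw [hsign] at this
  exact hy.isCongruent_diagonal_sign_eigenvalues.symm.trans
    (this.trans hy'.isCongruent_diagonal_sign_eigenvalues)

lemma hasType_imPart_conj_add {p j k : ℕ} {g v z : Matrix (Fin p) (Fin p) ℂ} (hg : IsUnit g)
    (hv : v.IsHermitian) (h : hasType (imPart z) j k) :
    hasType (imPart (g * z * gᴴ + v)) j k := by
  rw [imPart_add, imPart_conj, imPart_eq_zero_iff.mpr hv, add_zero]
  exact h.isCongruent ⟨g, hg, rfl⟩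

theorem stmt_16_general {p : ℕ} (j k : ℕ) :
    let T : Set (Matrix (Fin p) (Fin p) ℂ) :=
      {z | hasType ((2 * Complex.I)⁻¹ • (z - z.conjTranspose)) j k}
    (∀ g : Matrix (Fin p) (Fin p) ℂ, IsUnit g →
      ∀ v : Matrix (Fin p) (Fin p) ℂ, v.IsHermitian →
        Set.BijOn (fun z => g * z * g.conjTranspose + v) T T) ∧
    (∀ z ∈ T, ∀ z' ∈ T, ∃ g : Matrix (Fin p) (Fin p) ℂ, IsUnit g ∧
      ∃ v : Matrix (Fin p) (Fin p) ℂ, v.IsHermitian ∧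
        z' = g * z * g.conjTranspose + v) := by
  intro T
  refine ⟨fun g hg v hv => ?_, fun z hz z' hz' => ?_⟩
  · have hg' : IsUnit g⁻¹ := isUnit_nonsing_inv_iff.mpr hg
    have hv' : (-(g⁻¹ * v * g⁻¹ᴴ)).IsHermitian := (isHermitian_mul_mul_conjTranspose _ hv).neg
    refine Set.InvOn.bijOn (f' := fun w => g⁻¹ * w * g⁻¹ᴴ + -(g⁻¹ * v * g⁻¹ᴴ))
      ⟨fun z _ => ?_, fun w _ => ?_⟩ (fun z hz => hasType_imPart_conj_add hg hv hz)
      (fun w hw => hasType_imPart_conj_add hg' hv' hw)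
    · simp only [Matrix.mul_add, Matrix.add_mul, inv_conj_conj_cancel hg,
        add_neg_cancel_right]
    · simp only [Matrix.mul_add, Matrix.add_mul, conj_inv_conj_cancel hg,
        Matrix.mul_neg, Matrix.neg_mul, neg_add_cancel_right]
  · obtain ⟨g, hg, hgz⟩ := isCongruent_of_hasType (y := imPart z) (y' := imPart z') hz hz'
    refine ⟨g, hg, z' - g * z * gᴴ, ?_, (add_sub_cancel _ _).symm⟩
    rw [← imPart_eq_zero_iff, ← add_right_cancel_iff (a := imPart (g * z * gᴴ)), ← imPart_add,
      sub_add_cancel, imPart_conj, hgz, zero_add]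

/-- Let `T = T^p_{j,k}` be the tube of all `z ∈ ℂ^{p×p}` whose
hermitian imaginary part `(z − zᴴ)/(2i)` has type `(j,k)`. Then (a) for every
invertible `g` and hermitian `v` the affine map `z ↦ g·z·gᴴ + v` maps `T`
bijectively onto `T`, and (b) these maps act transitively on `T`; in particular
`T` is affinely homogeneous. -/
theorem stmt_16 {p : ℕ} (hp : 1 ≤ p) (j k : ℕ) (hjk : j + k ≤ p) :
    let T : Set (Matrix (Fin p) (Fin p) ℂ) :=
      {z | hasType ((2 * Complex.I)⁻¹ • (z - z.conjTranspose)) j k}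
    (∀ g : Matrix (Fin p) (Fin p) ℂ, IsUnit g →
      ∀ v : Matrix (Fin p) (Fin p) ℂ, v.IsHermitian →
        Set.BijOn (fun z => g * z * g.conjTranspose + v) T T) ∧
    (∀ z ∈ T, ∀ z' ∈ T, ∃ g : Matrix (Fin p) (Fin p) ℂ, IsUnit g ∧
      ∃ v : Matrix (Fin p) (Fin p) ℂ, v.IsHermitian ∧
        z' = g * z * g.conjTranspose + v) :=
  stmt_16_general j k
end
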